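/- arXiv:1111.4050 — 5 statements merged into one kernel-verified Lean document; each statement's English description precedes it below -/
import Mathlib

section
/- In any infinite sequence of finite trees, some tree is a minor of a later tree in the sequence (Kruskal's tree theorem for graph minors, a special case used in the graph minors project). -/
/-!
Root every tree and record its shape as a finite ordered rooted tree, splitting off the subtrees
below the neighbours of the root one at a time. Kruskal's theorem for ordered rooted trees under
homeomorphic embedding follows from Nash-Williams' minimal bad sequence argument together with
Higman's lemma for the lists of children. An embedding of shapes is then realised as a rooted minor
by induction along it: mapping a tree into a child subtree only enlarges the root's branch set by
the edge to that child, and mapping children to children glues minor models along root edges.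
-/

def SimpleGraph.IsMinor {W V : Type} (H : SimpleGraph W) (G : SimpleGraph V) : Prop :=
  ∃ f : W → Set V,
    (∀ w, (f w).Nonempty) ∧
    (∀ w, ((G.induce (f w)).Connected)) ∧
    (Pairwise fun w₁ w₂ => Disjoint (f w₁) (f w₂)) ∧
    (∀ ⦃w₁ w₂⦄, H.Adj w₁ w₂ → ∃ u ∈ f w₁, ∃ v ∈ f w₂, G.Adj u v)

namespace List

variable {α β : Type*}

theorem SublistForall₂.exists_of_mem {R : α → β → Prop} {l₁ : List α} {l₂ : List β}
    (h : SublistForall₂ R l₁ l₂) {a : α} (ha : a ∈ l₁) : ∃ b ∈ l₂, R a b := by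
  induction h with
  | nil => simp at ha
  | cons hab _ ih =>
    obtain rfl | ha := mem_cons.1 ha
    · exact ⟨_, mem_cons_self, hab⟩
    · obtain ⟨b, hb, hab⟩ := ih ha
      exact ⟨b, mem_cons_of_mem _ hb, hab⟩
  | cons_right _ ih =>
    obtain ⟨b, hb, hab⟩ := ih ha
    exact ⟨b, mem_cons_of_mem _ hb, hab⟩

theorem SublistForall₂.trans_of_mem {R : α → α → Prop} {l₁ l₂ l₃ : List α}
    (htrans : ∀ a b, ∀ c ∈ l₃, R a b → R b c → R a c)
    (h₁₂ : SublistForall₂ R l₁ l₂) (h₂₃ : SublistForall₂ R l₂ l₃) : SublistForall₂ R l₁ l₃ := by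
  induction h₂₃ generalizing l₁ with
  | nil => cases h₁₂; exact .nil
  | cons hbc _ ih =>
    have htail := fun a b c hc => htrans a b c (mem_cons_of_mem _ hc)
    rcases h₁₂ with _ | ⟨hab, h₁₂⟩ | h₁₂
    · exact .nil
    · exact .cons (htrans _ _ _ mem_cons_self hab hbc) (ih htail h₁₂)
    · exact .cons_right (ih htail h₁₂)
  | cons_right _ ih =>
    exact .cons_right (ih (fun a b c hc => htrans a b c (mem_cons_of_mem _ hc)) h₁₂)

end List

structure RTree : Type where
  node ::
  children : List RTree

namespace RTree

@[induction_eliminator]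
theorem induction {P : RTree → Prop} (node : ∀ l, (∀ t ∈ l, P t) → P (node l)) (t : RTree) :
    P t :=
  RTree.rec (motive_2 := fun l => ∀ t ∈ l, P t) node (List.forall_mem_nil P)
    (fun _ _ ht hl => List.forall_mem_cons.2 ⟨ht, hl⟩) t

@[simp] theorem node_children (t : RTree) : node t.children = t := by cases t; rfl

theorem sizeOf_lt_of_mem {t : RTree} {l : List RTree} (h : t ∈ l) :
    sizeOf t < sizeOf (node l) := by
  have := List.sizeOf_lt_of_mem h
  simp only [node.sizeOf_spec]; omega

/-- Homeomorphic embedding of ordered rooted trees: children are matched, in order, to children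
or to their descendants. -/
inductive Emb : RTree → RTree → Prop
  | sub {s t : RTree} {l : List RTree} : Emb s t → t ∈ l → Emb s (node l)
  | lift {ls lt : List RTree} : List.SublistForall₂ Emb ls lt → Emb (node ls) (node lt)

theorem Emb.refl (t : RTree) : Emb t t := by
  induction t with
  | node l ih => exact .lift (List.sublistForall₂_iff.2 ⟨l, List.forall₂_same.2 ih, .refl l⟩)

theorem Emb.trans {a b c : RTree} (hab : Emb a b) (hbc : Emb b c) : Emb a c := by
  induction c generalizing a b with
  | node lc ih =>
  cases hbc with
  | sub hbc hc => exact .sub (ih _ hc hab hbc) hc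
  | lift hbc =>
    cases hab with
    | sub hab hb =>
      obtain ⟨c, hc, hbc⟩ := hbc.exists_of_mem hb
      exact .sub (ih c hc hab hbc) hc
    | lift hab => exact .lift (hab.trans_of_mem (fun _ _ c hc => ih c hc) hbc)

instance : IsPreorder RTree Emb where
  refl := Emb.refl
  trans _ _ _ := Emb.trans

open Set.PartiallyWellOrderedOn

theorem partiallyWellOrderedOn_children_of_isMinBadSeq {f : ℕ → RTree}
    (hbad : IsBadSeq Emb Set.univ f) (hmin : ∀ n, IsMinBadSeq Emb sizeOf Set.univ n f) :
    {t | ∃ n, t ∈ (f n).children}.PartiallyWellOrderedOn Emb := by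
  rw [iff_forall_not_isBadSeq]
  rintro g ⟨hg, hgbad⟩
  choose idx hidx using hg
  set k₀ := Function.argmin idx
  set m := idx k₀
  -- `m` is the least parent index, so `f 0, …, f (m - 1), g k₀, g (k₀ + 1), …` is bad and smaller
  -- than `f` at `m`
  refine hmin m (fun i => if i < m then f i else g (k₀ + (i - m))) (fun i hi => (if_pos hi).symm)
    ?_ ⟨fun _ => trivial, fun i j hij => ?_⟩
  · simpa using sizeOf_lt_of_mem (hidx k₀)
  · by_cases hj : j < m
    · simpa [hj, hij.trans hj] using hbad.2 i j hij
    by_cases hi : i < m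
    · simp only [hi, hj, if_true, if_false]
      exact fun h => hbad.2 i _ (hi.trans_le (Function.argmin_le idx _))
        (by simpa using Emb.sub h (hidx _))
    · simpa [hi, hj] using hgbad (k₀ + (i - m)) (k₀ + (j - m)) (by omega)

theorem partiallyWellOrderedOn_emb : (Set.univ : Set RTree).PartiallyWellOrderedOn Emb := by
  rw [iff_not_exists_isMinBadSeq sizeOf]
  rintro ⟨f, hbad, hmin⟩
  obtain ⟨i, j, hij, h⟩ := (partiallyWellOrderedOn_sublistForall₂ Emb
    (partiallyWellOrderedOn_children_of_isMinBadSeq hbad hmin)).exists_lt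
      (f := fun n => (f n).children) fun n _ ht => ⟨n, ht⟩
  exact hbad.2 i j hij (by simpa using Emb.lift h)

end RTree

namespace SimpleGraph

variable {V W : Type*} {G : SimpleGraph V} {H : SimpleGraph W}

theorem subset_of_preconnected_induce {A S : Set V} (hA : (G.induce A).Preconnected) {u : V}
    (huA : u ∈ A) (huS : u ∈ S) (hS : ∀ x ∈ S, ∀ y ∈ A, G.Adj x y → y ∈ S) : A ⊆ S := by
  intro v hv
  obtain ⟨p⟩ := hA ⟨u, huA⟩ ⟨v, hv⟩
  suffices ∀ x y (p : (G.induce A).Walk x y), x.1 ∈ S → y.1 ∈ S from this _ _ p huS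
  intro x y p
  induction p with
  | nil => exact id
  | cons h _ ih => exact fun hx => ih (hS _ hx _ (Subtype.prop _) h)

theorem connected_induce_singleton (v : V) : (G.induce {v}).Connected := by
  rw [induce_singleton_eq_top]
  exact connected_top

def reachWithin (G : SimpleGraph V) (A : Set V) (u : V) : Set V :=
  {v | ∃ p : G.Walk u v, ∀ x ∈ p.support, x ∈ A}

section reachWithin

variable {A : Set V} {u v w : V}

theorem reachWithin_subset : G.reachWithin A u ⊆ A :=
  fun _ ⟨p, hp⟩ => hp _ p.end_mem_support

theorem mem_reachWithin_self (hu : u ∈ A) : u ∈ G.reachWithin A u :=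
  ⟨.nil, by simpa using hu⟩

theorem mem_reachWithin_of_adj (hv : v ∈ G.reachWithin A u) (hw : w ∈ A) (hvw : G.Adj v w) :
    w ∈ G.reachWithin A u := by
  obtain ⟨p, hp⟩ := hv
  refine ⟨p.concat hvw, fun x hx => ?_⟩
  rw [Walk.support_concat, List.mem_append, List.mem_singleton] at hx
  exact hx.elim (hp x) (· ▸ hw)

theorem reachable_of_mem_reachWithin {u' : V} (hv : v ∈ G.reachWithin A u)
    (hv' : v ∈ G.reachWithin A u') : G.Reachable u u' :=
  ⟨hv.choose.append hv'.choose.reverse⟩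

theorem connected_induce_reachWithin (hu : u ∈ A) : (G.induce (G.reachWithin A u)).Connected := by
  classical
  refine induce_connected_of_patches u (mem_reachWithin_self hu) fun {v} ⟨p, hp⟩ =>
    ⟨{x | x ∈ p.support}, fun x hx => ?_, p.start_mem_support, p.end_mem_support,
      p.connected_induce_support.preconnected _ _⟩
  exact ⟨p.takeUntil x hx, fun y hy => hp y (p.support_takeUntil_subset_support hx hy)⟩

end reachWithin

/-- `C` and `B` are the parts of `c` and of `r` in `A` once the edge `rc` is deleted; they are
disjoint because `rc` is a bridge. -/
theorem IsAcyclic.exists_eq_union_of_adj (hG : G.IsAcyclic) {A : Set V}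
    (hA : (G.induce A).Connected) {r c : V} (hr : r ∈ A) (hc : c ∈ A) (hrc : G.Adj r c) :
    ∃ C B : Set V, A = C ∪ B ∧ (G.induce C).Connected ∧ (G.induce B).Connected ∧ c ∈ C ∧ r ∈ B ∧
      Disjoint C B ∧ ∀ u ∈ C, ∀ v ∈ B, G.Adj u v → u = c ∧ v = r := by
  set G' := G.deleteEdges {s(r, c)}
  have hG'adj : ∀ {x y}, G.Adj x y → s(x, y) ≠ s(r, c) → G'.Adj x y := fun hxy he =>
    (deleteEdges_adj ..).2 ⟨hxy, he⟩
  have hconn : ∀ {S : Set V}, (G'.induce S).Connected → (G.induce S).Connected :=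
    fun h => h.mono fun _ _ => (deleteEdges_le (G := G) _ ·)
  have hcC : c ∈ G'.reachWithin A c := mem_reachWithin_self hc
  have hrB : r ∈ G'.reachWithin A r := mem_reachWithin_self hr
  have hdisj : Disjoint (G'.reachWithin A c) (G'.reachWithin A r) :=
    Set.disjoint_left.2 fun x hxc hxr =>
      isAcyclic_iff_forall_adj_isBridge.1 hG hrc (reachable_of_mem_reachWithin hxr hxc)
  refine ⟨G'.reachWithin A c, G'.reachWithin A r, ?_, ?_, ?_, hcC, hrB, hdisj, ?_⟩
  · refine subset_antisymm (subset_of_preconnected_induce hA.preconnected hr (Or.inr hrB) ?_)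
      (Set.union_subset reachWithin_subset reachWithin_subset)
    intro x hx y hy hxy
    by_cases he : s(x, y) = s(r, c)
    · rcases Sym2.eq_iff.1 he with ⟨-, rfl⟩ | ⟨-, rfl⟩
      exacts [Or.inl hcC, Or.inr hrB]
    · exact hx.imp (mem_reachWithin_of_adj · hy (hG'adj hxy he))
        (mem_reachWithin_of_adj · hy (hG'adj hxy he))
  · exact hconn (connected_induce_reachWithin hc)
  · exact hconn (connected_induce_reachWithin hr)
  · intro u hu v hv huv
    by_cases he : s(u, v) = s(r, c)
    · rcases Sym2.eq_iff.1 he with ⟨rfl, -⟩ | h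
      · exact (Set.disjoint_left.1 hdisj hu hrB).elim
      · exact h
    · exact (Set.disjoint_left.1 hdisj (mem_reachWithin_of_adj hu (reachWithin_subset hv)
        (hG'adj huv he)) hv).elim

variable (G) in
/-- `Models t A r`: the rooted tree `t` is the shape of `G[A]` rooted at `r`. For a node with
children `s :: l`, the part `A` modelled by `s` hangs from a neighbour `c` of `r`, the rest `B ∋ r`
is modelled by `node l`, and `rc` is the only edge between them. -/
inductive Models : RTree → Set V → V → Prop
  | leaf (r : V) : Models (.node []) {r} r
  | cons {s : RTree} {l : List RTree} {A B : Set V} {c r : V} :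
      Models s A c → Models (.node l) B r → G.Adj r c → Disjoint A B →
      (∀ u ∈ A, ∀ v ∈ B, G.Adj u v → u = c ∧ v = r) → Models (.node (s :: l)) (A ∪ B) r

namespace Models

theorem root_mem {t : RTree} {A : Set V} {r : V} (h : G.Models t A r) : r ∈ A := by
  induction h with
  | leaf r => rfl
  | cons _ _ _ _ _ _ ih => exact Or.inr ih

theorem exists_of_mem_children {l : List RTree} {B : Set V} {r : V} (h : G.Models (.node l) B r)
    {t : RTree} (ht : t ∈ l) : ∃ C c, G.Models t C c ∧ C ⊆ B ∧ r ∉ C ∧ G.Adj r c := by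
  induction l generalizing B with
  | nil => simp at ht
  | cons s l ih =>
    rcases h with _ | ⟨hs, hl, hrc, hdisj, -⟩
    obtain rfl | ht := List.mem_cons.1 ht
    · exact ⟨_, _, hs, Set.subset_union_left, Set.disjoint_right.1 hdisj hl.root_mem, hrc⟩
    · obtain ⟨C, c, htC, hCB, hrC, hrc⟩ := ih hl ht
      exact ⟨C, c, htC, hCB.trans Set.subset_union_right, hrC, hrc⟩

end Models

theorem IsAcyclic.exists_models [Finite V] (hG : G.IsAcyclic) {A : Set V}
    (hA : (G.induce A).Connected) {r : V} (hr : r ∈ A) : ∃ t, G.Models t A r := by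
  induction h : A.ncard using Nat.strong_induction_on generalizing A r with
  | _ n ih =>
  subst h
  by_cases hleaf : ∃ c ∈ A, G.Adj r c
  · obtain ⟨c, hc, hrc⟩ := hleaf
    obtain ⟨C, B, rfl, hC, hB, hcC, hrB, hdisj, hcross⟩ := hG.exists_eq_union_of_adj hA hr hc hrc
    obtain ⟨s, hs⟩ := ih _ (Set.ncard_lt_ncard (Set.ssubset_iff_of_subset Set.subset_union_left
      |>.2 ⟨r, Or.inr hrB, Set.disjoint_right.1 hdisj hrB⟩)) hC hcC rfl
    obtain ⟨⟨l⟩, hl⟩ := ih _ (Set.ncard_lt_ncard (Set.ssubset_iff_of_subset Set.subset_union_right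
      |>.2 ⟨c, Or.inl hcC, Set.disjoint_left.1 hdisj hcC⟩)) hB hrB rfl
    exact ⟨_, hs.cons hl hrc hdisj hcross⟩
  · have : A = {r} := subset_antisymm (subset_of_preconnected_induce hA.preconnected hr rfl
      fun x hx y hy hxy => (hleaf ⟨y, hy, hx ▸ hxy⟩).elim) (Set.singleton_subset_iff.2 hr)
    exact this ▸ ⟨_, .leaf r⟩

/-- A minor model of `H[A]` in `G[B]` in which the branch set of the root `r` contains `s`. -/
structure RootedMinorMap (H : SimpleGraph W) (A : Set W) (r : W) (G : SimpleGraph V) (B : Set V)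
    (s : V) where
  branch : W → Set V
  branch_subset : ∀ w ∈ A, branch w ⊆ B
  connected_branch : ∀ w ∈ A, (G.induce (branch w)).Connected
  pairwiseDisjoint : A.PairwiseDisjoint branch
  exists_adj : ∀ w₁ ∈ A, ∀ w₂ ∈ A, H.Adj w₁ w₂ → ∃ u ∈ branch w₁, ∃ v ∈ branch w₂, G.Adj u v
  root_mem : r ∈ A
  mem_branch_root : s ∈ branch r

namespace RootedMinorMap

variable {A A₁ A₂ : Set W} {c r : W} {B B₁ B₂ : Set V} {s s' : V}

def singleton (H : SimpleGraph W) (r : W) (hs : s ∈ B) : RootedMinorMap H {r} r G B s where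
  branch _ := {s}
  branch_subset _ _ := Set.singleton_subset_iff.2 hs
  connected_branch _ _ := connected_induce_singleton s
  pairwiseDisjoint := Set.pairwiseDisjoint_singleton _ _
  exists_adj _ h₁ _ h₂ h := (H.ne_of_adj h (h₁.trans h₂.symm)).elim
  root_mem := rfl
  mem_branch_root := rfl

def mono (f : RootedMinorMap H A r G B₁ s) (hB : B₁ ⊆ B₂) : RootedMinorMap H A r G B₂ s where
  __ := f
  branch_subset w hw := (f.branch_subset w hw).trans hB

open Classical in
noncomputable def extendRoot (f : RootedMinorMap H A r G B s') (hs : s ∉ B)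
    (hss' : G.Adj s s') : RootedMinorMap H A r G (insert s B) s where
  branch := Function.update f.branch r (insert s (f.branch r))
  branch_subset w hw := by
    rcases eq_or_ne w r with rfl | hwr
    · simpa using Set.insert_subset_insert (f.branch_subset w hw)
    · simpa [hwr] using (f.branch_subset w hw).trans (Set.subset_insert s B)
  connected_branch w hw := by
    rcases eq_or_ne w r with rfl | hwr
    · rw [Function.update_self, Set.insert_eq]
      exact connected_induce_union (connected_induce_singleton s).preconnected
        (f.connected_branch w hw).preconnected rfl f.mem_branch_root hss'
    · rw [Function.update_of_ne hwr]
      exact f.connected_branch w hw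
  pairwiseDisjoint w₁ hw₁ w₂ hw₂ hne := by
    have key : ∀ w ∈ A, w ≠ r → Disjoint (insert s (f.branch r)) (f.branch w) := fun w hw hwr =>
      Set.disjoint_insert_left.2
        ⟨fun h => hs (f.branch_subset w hw h), f.pairwiseDisjoint f.root_mem hw hwr.symm⟩
    rcases eq_or_ne w₁ r with h₁ | h₁ <;> rcases eq_or_ne w₂ r with h₂ | h₂
    · exact (hne (h₁.trans h₂.symm)).elim
    · simpa [Function.onFun, h₁, h₂] using key w₂ hw₂ h₂
    · simpa [Function.onFun, h₁, h₂] using (key w₁ hw₁ h₁).symm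
    · simpa [Function.onFun, h₁, h₂] using f.pairwiseDisjoint hw₁ hw₂ hne
  exists_adj w₁ hw₁ w₂ hw₂ h := by
    obtain ⟨u, hu, v, hv, huv⟩ := f.exists_adj w₁ hw₁ w₂ hw₂ h
    refine ⟨u, ?_, v, ?_, huv⟩ <;> simp only [Function.update_apply] <;> split_ifs <;> simp_all
  root_mem := f.root_mem
  mem_branch_root := by simp

open Classical in
noncomputable def union (f : RootedMinorMap H A₁ c G B₁ s') (g : RootedMinorMap H A₂ r G B₂ s)
    (hA : Disjoint A₁ A₂) (hB : Disjoint B₁ B₂)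
    (hcross : ∀ u ∈ A₁, ∀ v ∈ A₂, H.Adj u v → u = c ∧ v = r) (hs's : G.Adj s' s) :
    RootedMinorMap H (A₁ ∪ A₂) r G (B₁ ∪ B₂) s := by
  have h₁ : ∀ w ∈ A₁, A₁.piecewise f.branch g.branch w = f.branch w :=
    fun w hw => Set.piecewise_eq_of_mem _ _ _ hw
  have h₂ : ∀ w ∈ A₂, A₁.piecewise f.branch g.branch w = g.branch w :=
    fun w hw => Set.piecewise_eq_of_notMem _ _ _ (Set.disjoint_right.1 hA hw)
  refine
    { branch := A₁.piecewise f.branch g.branch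
      branch_subset := ?_
      connected_branch := ?_
      pairwiseDisjoint := ?_
      exists_adj := ?_
      root_mem := Or.inr g.root_mem
      mem_branch_root := h₂ r g.root_mem ▸ g.mem_branch_root }
  · rintro w (hw | hw)
    · exact h₁ w hw ▸ (f.branch_subset w hw).trans Set.subset_union_left
    · exact h₂ w hw ▸ (g.branch_subset w hw).trans Set.subset_union_right
  · rintro w (hw | hw)
    · exact h₁ w hw ▸ f.connected_branch w hw
    · exact h₂ w hw ▸ g.connected_branch w hw
  · rintro w₁ (hw₁ | hw₁) w₂ (hw₂ | hw₂) hne <;> simp only [Function.onFun]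
    · rw [h₁ w₁ hw₁, h₁ w₂ hw₂]; exact f.pairwiseDisjoint hw₁ hw₂ hne
    · rw [h₁ w₁ hw₁, h₂ w₂ hw₂]; exact hB.mono (f.branch_subset w₁ hw₁) (g.branch_subset w₂ hw₂)
    · rw [h₂ w₁ hw₁, h₁ w₂ hw₂]
      exact (hB.mono (f.branch_subset w₂ hw₂) (g.branch_subset w₁ hw₁)).symm
    · rw [h₂ w₁ hw₁, h₂ w₂ hw₂]; exact g.pairwiseDisjoint hw₁ hw₂ hne
  · rintro w₁ (hw₁ | hw₁) w₂ (hw₂ | hw₂) h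
    · rw [h₁ w₁ hw₁, h₁ w₂ hw₂]; exact f.exists_adj w₁ hw₁ w₂ hw₂ h
    · obtain ⟨rfl, rfl⟩ := hcross w₁ hw₁ w₂ hw₂ h
      rw [h₁ _ hw₁, h₂ _ hw₂]
      exact ⟨s', f.mem_branch_root, s, g.mem_branch_root, hs's⟩
    · obtain ⟨rfl, rfl⟩ := hcross w₂ hw₂ w₁ hw₁ h.symm
      rw [h₂ _ hw₁, h₁ _ hw₂]
      exact ⟨s, g.mem_branch_root, s', f.mem_branch_root, hs's.symm⟩
    · rw [h₂ w₁ hw₁, h₂ w₂ hw₂]; exact g.exists_adj w₁ hw₁ w₂ hw₂ h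

end RootedMinorMap

namespace Models

theorem nonempty_rootedMinorMap_of_sublistForall₂ {l₁ l₂ : List RTree}
    (h : l₁.SublistForall₂ RTree.Emb l₂)
    (ih : ∀ t ∈ l₂, ∀ {t₁ : RTree}, t₁.Emb t → ∀ {A : Set W} {r : W} {B : Set V} {s : V},
      H.Models t₁ A r → G.Models t B s → Nonempty (RootedMinorMap H A r G B s))
    {A : Set W} {r : W} {B : Set V} {s : V}
    (h₁ : H.Models (.node l₁) A r) (h₂ : G.Models (.node l₂) B s) :
    Nonempty (RootedMinorMap H A r G B s) := by
  induction h generalizing A B with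
  | nil =>
    cases h₁
    exact ⟨.singleton H r h₂.root_mem⟩
  | cons hab _ ihl =>
    rcases h₁ with _ | ⟨ha, hl₁, -, hA, hcross⟩
    rcases h₂ with _ | ⟨hb, hl₂, hsc, hB, -⟩
    obtain ⟨f⟩ := ih _ List.mem_cons_self hab ha hb
    obtain ⟨g⟩ := ihl (fun t ht => ih t (List.mem_cons_of_mem _ ht)) hl₁ hl₂
    exact ⟨f.union g hA hB hcross hsc.symm⟩
  | cons_right _ ihl =>
    rcases h₂ with _ | ⟨-, hl₂, -, -, -⟩
    obtain ⟨g⟩ := ihl (fun t ht => ih t (List.mem_cons_of_mem _ ht)) h₁ hl₂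
    exact ⟨g.mono Set.subset_union_right⟩

theorem nonempty_rootedMinorMap_of_emb {t₁ t₂ : RTree} (h : t₁.Emb t₂) {A : Set W} {r : W}
    {B : Set V} {s : V} (h₁ : H.Models t₁ A r) (h₂ : G.Models t₂ B s) :
    Nonempty (RootedMinorMap H A r G B s) := by
  induction t₂ generalizing t₁ A r B s with
  | node l ih =>
  cases h with
  | sub h ht =>
    obtain ⟨C, c, hC, hCB, hsC, hsc⟩ := h₂.exists_of_mem_children ht
    obtain ⟨f⟩ := ih _ ht h h₁ hC
    exact ⟨(f.extendRoot hsC hsc).mono (Set.insert_subset h₂.root_mem hCB)⟩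
  | lift h => exact nonempty_rootedMinorMap_of_sublistForall₂ h ih h₁ h₂

end Models

theorem RootedMinorMap.isMinor {V W : Type} {G : SimpleGraph V} {H : SimpleGraph W} {r : W}
    {B : Set V} {s : V} (f : RootedMinorMap H Set.univ r G B s) : H.IsMinor G :=
  ⟨f.branch, fun w => Set.nonempty_coe_sort.1 (f.connected_branch w trivial).nonempty,
    fun w => f.connected_branch w trivial, fun _ _ hne => f.pairwiseDisjoint trivial trivial hne,
    fun w₁ w₂ h => f.exists_adj w₁ trivial w₂ trivial h⟩

end SimpleGraph

/-- Kruskal's tree theorem (graph-minor form): in any infinite sequence of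
finite trees, some tree is a minor of a later one. -/
theorem kruskal_tree_minor (V : ℕ → Type) (hV : ∀ n, Fintype (V n))
    (T : ∀ n, SimpleGraph (V n)) (hT : ∀ n, (T n).IsTree) :
    ∃ i j : ℕ, i < j ∧ (T i).IsMinor (T j) := by
  have hmodel : ∀ n, ∃ r t, (T n).Models t Set.univ r := fun n => by
    have := hV n
    obtain ⟨r⟩ := (hT n).connected.nonempty
    exact ⟨r, (hT n).isAcyclic.exists_models
      ((SimpleGraph.induceUnivIso _).connected_iff.2 (hT n).connected) trivial⟩
  choose r t ht using hmodel
  obtain ⟨i, j, hij, hemb⟩ := RTree.partiallyWellOrderedOn_emb.exists_lt (f := t) fun _ => trivial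
  obtain ⟨f⟩ := SimpleGraph.Models.nonempty_rootedMinorMap_of_emb hemb (ht i) (ht j)
  exact ⟨i, j, hij, f.isMinor⟩
end

section
/- The Paris–Harrington principle holds: for all n, k, m there exists N such that every coloring of the n-element subsets of {1,...,N} with k colors has a homogeneous set H of size at least m that is relatively large, i.e., |H| ≥ min H. -/
/-!
Infinite Ramsey, by induction on `n`: pick a pivot `a` in the infinite set and an infinite subset
above `a` homogeneous for `e ↦ f (insert a e)`; iterating gives a sequence of pivots `A i` whose
colour with any later `n`-set is a colour `C i` depending only on `i`, and an infinite fibre of `C`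
is homogeneous. In an infinite homogeneous set of positive integers one finds relatively large
finite homogeneous sets of any size.

Compactness then makes the bound `N` uniform: for fixed `N` the colourings admitting a suitable
`H ⊆ [1, N]` form an open set of the compact space `Finset ℕ → Fin k` (the witness `H` only
involves the finitely many colours of subsets of `H`), these sets increase with `N`, and by the
first part they cover the whole space.
-/

open Finset

section

variable {α : Type*}

def IsHomogeneousOn (f : Finset ℕ → α) (n : ℕ) (T : Set ℕ) : Prop :=
  ∃ c, ∀ e : Finset ℕ, ↑e ⊆ T → #e = n → f e = c

theorem IsHomogeneousOn.mono {f : Finset ℕ → α} {n : ℕ} {T T' : Set ℕ}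
    (h : IsHomogeneousOn f n T) (hT' : T' ⊆ T) : IsHomogeneousOn f n T' :=
  let ⟨c, hc⟩ := h
  ⟨c, fun e he => hc e (he.trans hT')⟩

def IsRelativelyLarge (H : Finset ℕ) : Prop := ∀ hne : H.Nonempty, H.min' hne ≤ #H

theorem Set.Infinite.exists_strictMono_prehomogeneous {n : ℕ}
    (ih : ∀ (g : Finset ℕ → α) (S : Set ℕ), S.Infinite →
      ∃ T ⊆ S, T.Infinite ∧ IsHomogeneousOn g n T)
    (f : Finset ℕ → α) {S : Set ℕ} (hS : S.Infinite) :
    ∃ (A : ℕ → ℕ) (C : ℕ → α), StrictMono A ∧ (∀ i, A i ∈ S) ∧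
      ∀ i, ∀ e : Finset ℕ, ↑e ⊆ A '' Set.Ioi i → #e = n → f (insert (A i) e) = C i := by
  have pivot (U : {U : Set ℕ // U.Infinite}) : ∃ a ∈ U.1, ∃ T ⊆ U.1 ∩ Set.Ioi a,
      T.Infinite ∧ IsHomogeneousOn (fun e => f (insert a e)) n T := by
    obtain ⟨a, ha⟩ := U.2.nonempty
    refine ⟨a, ha, ih _ _ ?_⟩
    simpa [Set.sdiff_eq, Set.compl_Iic] using U.2.sdiff (Set.finite_Iic a)
  choose a ha T hT hTinf C hC using pivot
  -- `U i` is the infinite set left after choosing the first `i` pivots.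
  let U : ℕ → {U : Set ℕ // U.Infinite} := fun i => (fun V => ⟨T V, hTinf V⟩)^[i] ⟨S, hS⟩
  have hU_succ (i : ℕ) : (U (i + 1)).1 = T (U i) := by
    simp only [U, Function.iterate_succ_apply']
  have hU_anti : Antitone fun i => (U i).1 := antitone_nat_of_succ_le fun i =>
    (hU_succ i).trans_le fun x hx => (hT _ hx).1
  have hA : StrictMono fun i => a (U i) := fun i j hij =>
    (hT _ (hU_succ i ▸ hU_anti hij (ha (U j)))).2
  refine ⟨_, fun i => C (U i), hA, fun i => hU_anti (Nat.zero_le i) (ha (U i)), ?_⟩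
  rintro i e he rfl
  refine hC _ e (fun x hx => ?_) rfl
  obtain ⟨j, hij, rfl⟩ := he hx
  exact hU_succ i ▸ hU_anti (Nat.succ_le_of_lt hij) (ha (U j))

theorem Set.Infinite.exists_infinite_isHomogeneousOn [Finite α] (n : ℕ) (f : Finset ℕ → α)
    {S : Set ℕ} (hS : S.Infinite) : ∃ T ⊆ S, T.Infinite ∧ IsHomogeneousOn f n T := by
  induction n generalizing f S with
  | zero => exact ⟨S, subset_rfl, hS, f ∅, fun e _ he => by rw [Finset.card_eq_zero.mp he]⟩
  | succ n ih =>
    obtain ⟨A, C, hA, hAS, hAC⟩ := hS.exists_strictMono_prehomogeneous ih f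
    obtain ⟨c, hc⟩ := Finite.exists_infinite_fiber C
    refine ⟨A '' (C ⁻¹' {c}), Set.image_subset_iff.mpr fun i _ => hAS i,
      (Set.infinite_coe_iff.mp hc).image hA.injective.injOn, c, fun e he hcard => ?_⟩
    have hne : e.Nonempty := card_pos.mp (by omega)
    obtain ⟨i, hi, hAi⟩ := he (e.min'_mem hne)
    have hAi_mem : A i ∈ e := hAi ▸ e.min'_mem hne
    have hrest : ↑(e.erase (A i)) ⊆ A '' Set.Ioi i := by
      intro x hx
      obtain ⟨hxi, hxe⟩ := mem_erase.mp hx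
      obtain ⟨j, -, rfl⟩ := he hxe
      exact ⟨j, hA.lt_iff_lt.mp (lt_of_le_of_ne (hAi ▸ e.min'_le _ hxe) (Ne.symm hxi)), rfl⟩
    have hcard_rest : #(e.erase (A i)) = n := by
      rw [card_erase_of_mem hAi_mem, hcard, Nat.add_sub_cancel]
    rw [← insert_erase hAi_mem, hAC i _ hrest hcard_rest, hi]

theorem Set.Infinite.exists_isRelativelyLarge_subset {T : Set ℕ} (hT : T.Infinite) (m : ℕ) :
    ∃ H : Finset ℕ, ↑H ⊆ T ∧ m ≤ #H ∧ IsRelativelyLarge H := by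
  obtain ⟨a, ha⟩ := hT.nonempty
  obtain ⟨H, hHT, hH⟩ := (hT.sdiff (Set.finite_singleton a)).exists_subset_card_eq (max m a)
  have haH : a ∉ H := fun h => (hHT h).2 rfl
  have hcard : #(insert a H) = max m a + 1 := by rw [card_insert_of_notMem haH, hH]
  refine ⟨insert a H, ?_, by omega, fun hne => ?_⟩
  · rw [coe_insert]
    exact Set.insert_subset ha fun x hx => (hHT hx).1
  · calc (insert a H).min' hne ≤ a := min'_le _ _ (mem_insert_self a H)
      _ ≤ #(insert a H) := by omega

theorem isOpen_of_forall_exists_finset_eqOn {ι : Type*} [TopologicalSpace α] [DiscreteTopology α]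
    {s : Set (ι → α)} (h : ∀ f ∈ s, ∃ F : Finset ι, ∀ g, (∀ i ∈ F, g i = f i) → g ∈ s) :
    IsOpen s := by
  refine isOpen_iff_forall_mem_open.mpr fun f hf => ?_
  obtain ⟨F, hF⟩ := h f hf
  exact ⟨(F : Set ι).pi fun i => {f i}, fun g hg => hF g hg,
    isOpen_set_pi F.finite_toSet fun i _ => isOpen_discrete _, fun i _ => rfl⟩

def largeHomogeneousColorings (n m N : ℕ) : Set (Finset ℕ → α) :=
  {f | ∃ H ⊆ Icc 1 N, m ≤ #H ∧ IsHomogeneousOn f n H ∧ IsRelativelyLarge H}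

theorem largeHomogeneousColorings_mono (n m : ℕ) :
    Monotone (largeHomogeneousColorings (α := α) n m) := fun _ _ hNM _ ⟨H, hH, hrest⟩ =>
  ⟨H, hH.trans (Icc_subset_Icc_right hNM), hrest⟩

theorem isOpen_largeHomogeneousColorings [TopologicalSpace α] [DiscreteTopology α]
    (n m N : ℕ) : IsOpen (largeHomogeneousColorings (α := α) n m N) := by
  refine isOpen_of_forall_exists_finset_eqOn
    fun f ⟨H, hHN, hm, ⟨c, hc⟩, hH⟩ => ⟨H.powerset, fun g hg => ?_⟩
  exact ⟨H, hHN, hm, ⟨c, fun e he hn => (hg e (mem_powerset.mpr he)).trans (hc e he hn)⟩, hH⟩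

theorem exists_mem_largeHomogeneousColorings [Finite α] (n m : ℕ) (f : Finset ℕ → α) :
    ∃ N, f ∈ largeHomogeneousColorings n m N := by
  obtain ⟨T, hT, hTinf, hhom⟩ := (Set.Ioi_infinite 0).exists_infinite_isHomogeneousOn n f
  obtain ⟨H, hHT, hm, hH⟩ := hTinf.exists_isRelativelyLarge_subset m
  exact ⟨H.sup id, H, fun x hx => mem_Icc.mpr ⟨hT (hHT hx), le_sup (f := id) hx⟩, hm,
    hhom.mono hHT, hH⟩

end

/-- The Paris–Harrington principle. -/
theorem paris_harrington :
    ∀ n k m : ℕ, ∃ N : ℕ, ∀ f : Finset ℕ → Fin k,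
      ∃ H : Finset ℕ, H ⊆ Finset.Icc 1 N ∧ m ≤ H.card ∧
        (∃ c : Fin k, ∀ e ⊆ H, e.card = n → f e = c) ∧
        (∀ hne : H.Nonempty, H.min' hne ≤ H.card) := by
  intro n k m
  obtain ⟨N, hN⟩ := isCompact_univ.elim_directed_cover _
    (isOpen_largeHomogeneousColorings (α := Fin k) n m)
    (fun f _ => Set.mem_iUnion.mpr (exists_mem_largeHomogeneousColorings n m f))
    (largeHomogeneousColorings_mono n m).directed_le
  exact ⟨N, fun f => hN (Set.mem_univ f)⟩
end

section
/- For n ≥ 3, a Steiner triple system of order n exists if and only if n ≡ 1 or 3 (mod 6). -/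
theorem sts_of_op {n : ℕ} (op : Fin n → Fin n → Fin n)
    (h1 : ∀ x, op x x = x) (h2 : ∀ x y, op x y = op y x)
    (h3 : ∀ x y, op x (op x y) = y) :
    ∃ T : Finset (Finset (Fin n)),
      (∀ t ∈ T, t.card = 3) ∧
      (∀ p q : Fin n, p ≠ q → ∃! t : Finset (Fin n), t ∈ T ∧ p ∈ t ∧ q ∈ t) := by
  have hne1 : ∀ x y, x ≠ y → op x y ≠ x := by
    intro x y h hx
    have := h3 x y
    rw [hx] at this
    rw [h1] at this
    exact h this
  have hne2 : ∀ x y, x ≠ y → op x y ≠ y := by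
    intro x y h hx
    have := h3 y x
    rw [h2 y x, hx, h1] at this
    exact h this.symm
  set tri : Fin n → Fin n → Finset (Fin n) := fun a b => {a, b, op a b} with htri
  have key : ∀ a b p q : Fin n, a ≠ b → p ≠ q → p ∈ tri a b → q ∈ tri a b →
      tri p q = tri a b := by
    intro a b p q hab hpq hp hq
    simp only [htri, Finset.mem_insert, Finset.mem_singleton] at hp hq
    have e1 : op a (op a b) = b := h3 a b
    have e2 : op b (op a b) = a := by rw [h2 a b]; exact h3 b a
    have e3 : op (op a b) a = b := by rw [h2]; exact e1
    have e4 : op (op a b) b = a := by rw [h2]; exact e2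
    have e5 : op b a = op a b := (h2 b a)
    rcases hp with rfl | rfl | rfl <;> rcases hq with rfl | rfl | rfl <;>
      first
      | exact absurd rfl hpq
      | rfl
      | (ext z;
         simp only [htri, e1, e2, e3, e4, e5, Finset.mem_insert, Finset.mem_singleton]; tauto)
  refine ⟨(Finset.univ.filter (fun p : Fin n × Fin n => p.1 ≠ p.2)).image
      (fun p => tri p.1 p.2), ?_, ?_⟩
  · intro t ht
    simp only [Finset.mem_image, Finset.mem_filter, Finset.mem_univ, true_and] at ht
    obtain ⟨⟨a, b⟩, hab, rfl⟩ := ht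
    simp only at hab
    rw [htri]
    rw [Finset.card_insert_of_notMem (by
      simp only [Finset.mem_insert, Finset.mem_singleton]
      push_neg
      exact ⟨hab, fun h => hne1 a b hab h.symm⟩),
      Finset.card_insert_of_notMem (by
      simp only [Finset.mem_singleton]
      exact fun h => hne2 a b hab h.symm),
      Finset.card_singleton]
  · intro p q hpq
    refine ⟨tri p q, ⟨?_, ?_, ?_⟩, ?_⟩
    · exact Finset.mem_image.2 ⟨(p, q), by simp [hpq], rfl⟩
    · simp [htri]
    · simp [htri]
    · rintro t ⟨ht, hpt, hqt⟩
      simp only [Finset.mem_image, Finset.mem_filter, Finset.mem_univ, true_and] at ht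
      obtain ⟨⟨a, b⟩, hab, rfl⟩ := ht
      exact (key a b p q hab hpq hpt hqt).symm


theorem sts_of_card {n : ℕ} {X : Type} [Fintype X] [DecidableEq X]
    (op : X → X → X) (hcard : Fintype.card X = n)
    (h1 : ∀ x, op x x = x) (h2 : ∀ x y, op x y = op y x)
    (h3 : ∀ x y, op x (op x y) = y) :
    ∃ T : Finset (Finset (Fin n)),
      (∀ t ∈ T, t.card = 3) ∧
      (∀ p q : Fin n, p ≠ q → ∃! t : Finset (Fin n), t ∈ T ∧ p ∈ t ∧ q ∈ t) := by
  let e := Fintype.equivFinOfCardEq hcard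
  refine sts_of_op (fun a b => e (op (e.symm a) (e.symm b))) ?_ ?_ ?_
  · intro x; simp [h1]
  · intro x y; simp [h2 (e.symm x) (e.symm y)]
  · intro x y; simp [h3]

def bop (m : ℕ) (x y : ZMod m × ZMod 3) : ZMod m × ZMod 3 :=
  if x.2 = y.2 then
    (if x.1 = y.1 then x else ((((m+1)/2 : ℕ) : ZMod m) * (x.1 + y.1), x.2 + 1))
  else if x.1 = y.1 then (x.1, -(x.2 + y.2))
  else if y.2 = x.2 + 1 then (2 * y.1 - x.1, x.2)
  else (2 * x.1 - y.1, y.2)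

theorem bose {m : ℕ} (hm : m % 2 = 1) :
    (∀ x, bop m x x = x) ∧ (∀ x y, bop m x y = bop m y x) ∧
      (∀ x y, bop m x (bop m x y) = y) := by
  haveI : NeZero m := ⟨by omega⟩
  set e : ZMod m := (((m+1)/2 : ℕ) : ZMod m) with he_def
  have he : (2 : ZMod m) * e = 1 := by
    have h2 : (2 * ((m+1)/2) : ℕ) = m + 1 := by omega
    have : ((2 * ((m+1)/2) : ℕ) : ZMod m) = ((m + 1 : ℕ) : ZMod m) := by rw [h2]
    push_cast at this
    simpa [ZMod.natCast_self] using this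
  have he2 : ∀ s : ZMod m, 2 * (e * s) = s := by
    intro s; rw [← mul_assoc, he, one_mul]
  have two_cancel : ∀ a b : ZMod m, 2 * a = 2 * b → a = b := by
    intro a b h
    have := congrArg (fun z => e * z) h
    simp only [← mul_assoc, mul_comm e 2, he, one_mul] at this
    exact this
  have j1 : ∀ i : ZMod 3, ¬ i = i + 1 := by decide
  have j2 : ∀ i j : ZMod 3, ¬ i = j → ¬ j = i + 1 → i = j + 1 := by decide
  have j3 : ∀ i j : ZMod 3, ¬ i = j → ¬ i = -(i + j) := by decide
  have j4 : ∀ i j : ZMod 3, ¬ i = j → -(i + -(i + j)) = j := by decide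
  have j5 : ∀ i : ZMod 3, ¬ i = i + 1 + 1 := by decide
  refine ⟨?_, ?_, ?_⟩
  · intro x; simp [bop]
  · rintro ⟨x1, x2⟩ ⟨y1, y2⟩
    by_cases hij : x2 = y2
    · subst hij
      by_cases hxy : x1 = y1
      · subst hxy; simp
      · simp [bop, hxy, Ne.symm hxy, add_comm x1 y1]
    · by_cases hxy : x1 = y1
      · subst hxy
        simp [bop, hij, Ne.symm hij, add_comm x2 y2]
      · by_cases hj : y2 = x2 + 1
        · have hj' : ¬ x2 = y2 + 1 := by rw [hj]; exact j5 x2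
          simp [bop, hij, Ne.symm hij, hxy, Ne.symm hxy, hj, hj', j5]
        · have hj' : x2 = y2 + 1 := j2 _ _ hij hj
          simp [bop, hij, Ne.symm hij, hxy, Ne.symm hxy, hj, hj', j5]
  · rintro ⟨x1, x2⟩ ⟨y1, y2⟩
    by_cases hij : x2 = y2
    · subst hij
      by_cases hxy : x1 = y1
      · subst hxy; simp [bop]
      · have hinner : bop m (x1, x2) (y1, x2) = (e * (x1 + y1), x2 + 1) := by
          simp [bop, hxy, he_def]
        rw [hinner]
        have hc2 : ¬ x1 = e * (x1 + y1) := by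
          intro h
          apply hxy
          have h2 : 2 * x1 = x1 + y1 := by
            calc 2 * x1 = 2 * (e * (x1 + y1)) := by rw [← h]
            _ = x1 + y1 := he2 _
          linear_combination h2
        have : 2 * (e * (x1 + y1)) - x1 = y1 := by rw [he2]; ring
        simp [bop, j1 x2, hc2, this]
    · by_cases hxy : x1 = y1
      · subst hxy
        have hinner : bop m (x1, x2) (x1, y2) = (x1, -(x2 + y2)) := by
          simp [bop, hij]
        rw [hinner]
        have hc : ¬ x2 = -(x2 + y2) := j3 _ _ hij
        simp only [bop]
        rw [if_neg hc, if_true, j4 _ _ hij]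
      · by_cases hj : y2 = x2 + 1
        · have hinner : bop m (x1, x2) (y1, y2) = (2 * y1 - x1, x2) := by
            simp [bop, hij, hxy, hj]
          rw [hinner]
          have hc2 : ¬ x1 = 2 * y1 - x1 := by
            intro h
            exact hxy (two_cancel _ _ (by linear_combination h))
          have hval : e * (x1 + (2 * y1 - x1)) = y1 := by
            apply two_cancel
            rw [he2]; ring
          simp only [bop]
          rw [if_true, if_neg hc2, Prod.mk.injEq]
          exact ⟨hval, hj.symm⟩
        · have hj' : x2 = y2 + 1 := j2 _ _ hij hj
          have hinner : bop m (x1, x2) (y1, y2) = (2 * x1 - y1, y2) := by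
            simp [bop, hij, hxy, hj]
          rw [hinner]
          have hc2 : ¬ x1 = 2 * x1 - y1 := by
            intro h
            exact hxy (by linear_combination -h)
          have hc3 : ¬ y2 = x2 + 1 := hj
          have hv : 2 * x1 - (2 * x1 - y1) = y1 := by ring
          simp [bop, hij, hc2, hc3, hv]


def tau (k : ℕ) (x : ZMod (2*k)) : ZMod (2*k) := if x.val < k then x + x else x + x + 1

def sig (k : ℕ) (z : ZMod (2*k)) : ZMod (2*k) :=
  if z.val % 2 = 0 then ((z.val / 2 : ℕ) : ZMod (2*k)) else ((k + z.val / 2 : ℕ) : ZMod (2*k))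

def sop (k : ℕ) (a b : Option (ZMod (2*k) × ZMod 3)) : Option (ZMod (2*k) × ZMod 3) :=
  match a, b with
  | none, none => none
  | none, some (i,j) => some (if k ≤ i.val then (i + k, j+1) else (i + k, j - 1))
  | some (i,j), none => some (if k ≤ i.val then (i + k, j+1) else (i + k, j - 1))
  | some (x,i), some (y,j) =>
    if i = j then (if x = y then some (x,i) else some (sig k (x+y), i+1))
    else if x = y ∧ x.val < k then some (x, -(i+j))
    else if j = i + 1 then (if y = x + k ∧ k ≤ x.val then none else some (tau k y - x, i))
    else (if x = y + k ∧ k ≤ y.val then none else some (tau k x - y, j))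

theorem skolem {k : ℕ} (hk : 1 ≤ k) :
    (∀ x, sop k x x = x) ∧ (∀ x y, sop k x y = sop k y x) ∧
      (∀ x y, sop k x (sop k x y) = y) := by
  haveI : NeZero (2*k) := ⟨by omega⟩
  haveI : Fact (1 < 2*k) := ⟨by omega⟩
  have hvlt : ∀ x : ZMod (2*k), x.val < 2*k := fun x => ZMod.val_lt x
  have hcv : ∀ x : ZMod (2*k), ((x.val : ℕ) : ZMod (2*k)) = x := fun x =>
    ZMod.natCast_rightInverse x
  have kv : ((k : ℕ) : ZMod (2*k)).val = k := ZMod.val_cast_of_lt (by omega)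
  have hvadd : ∀ x y : ZMod (2*k), (x + y).val = (x.val + y.val) % (2*k) :=
    fun x y => ZMod.val_add x y
  have hvnat : ∀ a : ℕ, ((a : ZMod (2*k))).val = a % (2*k) := fun a => ZMod.val_natCast _ a
  have hone : (1 : ZMod (2*k)).val = 1 := ZMod.val_one _
  have hkk0 : ((k : ℕ) : ZMod (2*k)) + ((k : ℕ) : ZMod (2*k)) = 0 := by
    rw [← Nat.cast_add, show k + k = 2*k by ring, ZMod.natCast_self]
  have hxkk : ∀ x : ZMod (2*k), x + k + k = x := by
    intro x; rw [add_assoc, hkk0, add_zero]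
  have hx_ne_xk : ∀ x : ZMod (2*k), ¬ x = x + k := by
    intro x h
    have h0 : ((k : ℕ) : ZMod (2*k)) = 0 := (left_eq_add.mp h)
    rw [h0] at kv
    simp at kv
    omega
  have haddk_lt : ∀ x : ZMod (2*k), x.val < k → (x + k).val = x.val + k := by
    intro x h
    rw [hvadd, kv, Nat.mod_eq_of_lt (by omega)]
  have haddk_ge : ∀ x : ZMod (2*k), k ≤ x.val → (x + k).val = x.val - k := by
    intro x h
    rw [hvadd, kv]
    have := hvlt x
    have h2 : x.val + k = (x.val - k) + 1*(2*k) := by omega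
    rw [h2, Nat.add_mul_mod_self_right, Nat.mod_eq_of_lt (by omega)]
  -- tau values
  have tv1 : ∀ x : ZMod (2*k), x.val < k → tau k x = x + x ∧ (x+x).val = 2*x.val := by
    intro x h
    constructor
    · simp [tau, h]
    · rw [hvadd, Nat.mod_eq_of_lt (by omega)]; ring
  have tv2 : ∀ x : ZMod (2*k), k ≤ x.val →
      tau k x = x + x + 1 ∧ (x+x+1).val = 2*x.val + 1 - 2*k := by
    intro x h
    have hx := hvlt x
    constructor
    · simp [tau, h, Nat.not_lt.mpr h]
    · rw [hvadd, hvadd, hone]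
      have h2 : x.val + x.val = (2*x.val - 2*k) + 1*(2*k) := by omega
      rw [h2, Nat.add_mul_mod_self_right,
        Nat.mod_eq_of_lt (show 2*x.val - 2*k < 2*k by omega),
        Nat.mod_eq_of_lt (show 2*x.val - 2*k + 1 < 2*k by omega)]
      omega
  -- sig values
  have sv1 : ∀ z : ZMod (2*k), z.val % 2 = 0 →
      sig k z = ((z.val / 2 : ℕ) : ZMod (2*k)) ∧ (sig k z).val = z.val / 2 := by
    intro z h
    have hz := hvlt z
    refine ⟨by simp [sig, h], ?_⟩
    simp only [sig, h, if_true, if_pos h]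
    rw [hvnat, Nat.mod_eq_of_lt (by omega)]
  have sv2 : ∀ z : ZMod (2*k), z.val % 2 = 1 →
      sig k z = ((k + z.val / 2 : ℕ) : ZMod (2*k)) ∧ (sig k z).val = k + z.val / 2 := by
    intro z h
    have hz := hvlt z
    have h' : ¬ z.val % 2 = 0 := by omega
    refine ⟨by simp [sig, h'], ?_⟩
    simp only [sig, if_neg h']
    rw [hvnat, Nat.mod_eq_of_lt (by omega)]
  have sig_tau : ∀ x : ZMod (2*k), sig k (tau k x) = x := by
    intro x
    have hx := hvlt x
    by_cases h : x.val < k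
    · obtain ⟨ht, hv⟩ := tv1 x h
      rw [ht]
      obtain ⟨hs, -⟩ := sv1 (x+x) (by omega)
      rw [hs, hv, show 2*x.val/2 = x.val by omega, hcv]
    · push_neg at h
      obtain ⟨ht, hv⟩ := tv2 x h
      rw [ht]
      obtain ⟨hs, -⟩ := sv2 (x+x+1) (by omega)
      rw [hs, hv, show k + (2*x.val + 1 - 2*k)/2 = x.val by omega, hcv]
  have tau_sig : ∀ z : ZMod (2*k), tau k (sig k z) = z := by
    intro z
    have hz := hvlt z
    by_cases h : z.val % 2 = 0
    · obtain ⟨hs, hv⟩ := sv1 z h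
      obtain ⟨ht, -⟩ := tv1 (sig k z) (by omega)
      rw [ht, hs, ← Nat.cast_add, show z.val/2 + z.val/2 = z.val by omega, hcv]
    · have h1 : z.val % 2 = 1 := by omega
      obtain ⟨hs, hv⟩ := sv2 z h1
      obtain ⟨ht, -⟩ := tv2 (sig k z) (by omega)
      rw [ht, hs, ← Nat.cast_add, ← Nat.cast_one, ← Nat.cast_add,
        show k + z.val/2 + (k + z.val/2) + 1 = z.val + 2*k by omega,
        Nat.cast_add, ZMod.natCast_self, add_zero, hcv]
  have diag_lt : ∀ x : ZMod (2*k), x.val < k → sig k (x + x) = x := by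
    intro x h
    obtain ⟨ht, -⟩ := tv1 x h
    rw [← ht, sig_tau]
  have diag_ge : ∀ x : ZMod (2*k), k ≤ x.val → sig k (x + x) = x + k := by
    intro x h
    have hx := hvlt x
    have hval : (x+x).val = 2*x.val - 2*k := by
      rw [hvadd]
      have h2 : x.val + x.val = (2*x.val - 2*k) + 1*(2*k) := by omega
      rw [h2, Nat.add_mul_mod_self_right,
        Nat.mod_eq_of_lt (show 2*x.val - 2*k < 2*k by omega)]
    obtain ⟨hs, -⟩ := sv1 (x+x) (by omega)
    rw [hs, hval, show (2*x.val-2*k)/2 = x.val - k by omega, ← haddk_ge x h, hcv]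
  have hneg : -((k:ℕ) : ZMod (2*k)) = ((k:ℕ) : ZMod (2*k)) := neg_eq_of_add_eq_zero_left hkk0
  have hknz : ¬ ((k:ℕ) : ZMod (2*k)) = 0 := by
    intro h0
    rw [h0] at kv
    simp at kv
    omega
  -- index facts
  have d3 : ∀ i : ZMod 3, ¬ i = i + 1 := by decide
  have d4 : ∀ i : ZMod 3, ¬ i = i - 1 := by decide
  have d6 : ∀ i j : ZMod 3, ¬ i = j → ¬ j = i + 1 → i = j + 1 := by decide
  have d7 : ∀ i : ZMod 3, ¬ i - 1 = i + 1 := by decide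
  have d9 : ∀ i j : ZMod 3, ¬ i = j → ¬ i = -(i+j) := by decide
  have d10 : ∀ i j : ZMod 3, ¬ i = j → -(i + -(i+j)) = j := by decide
  have d11 : ∀ i j : ZMod 3, i = j + 1 → ¬ j = i + 1 := by decide
  have d12 : ∀ j : ZMod 3, j + 1 - 1 = j := by decide
  have d14 : ∀ i : ZMod 3, ¬ i = i + 1 + 1 := by decide
  have d13 : ∀ j : ZMod 3, j - 1 + 1 = j := by decide
  refine ⟨?_, ?_, ?_⟩
  · rintro (_ | ⟨x, i⟩)
    · rfl
    · simp [sop]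
  · rintro (_ | ⟨x, i⟩) (_ | ⟨y, j⟩)
    · rfl
    · rfl
    · rfl
    · by_cases hij : i = j
      · subst hij
        by_cases hxy : x = y
        · subst hxy; rfl
        · simp [sop, hxy, Ne.symm hxy, add_comm x y]
      · have hji : ¬ j = i := fun h => hij h.symm
        by_cases hxy : x = y
        · subst hxy
          by_cases hvk : x.val < k
          · simp [sop, hij, hji, hvk, add_comm i j]
          · by_cases hj : j = i + 1
            · have hi : ¬ i = j + 1 := d11 j i hj
              simp [sop, hij, hji, hvk, hj, hi, hx_ne_xk x, d14]
            · have hi : i = j + 1 := d6 i j hij hj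
              simp [sop, hij, hji, hvk, hj, d11 i j hi, hi, hx_ne_xk x, d14]
        · have hyx : ¬ y = x := fun h => hxy h.symm
          by_cases hj : j = i + 1
          · have hi : ¬ i = j + 1 := d11 j i hj
            simp [sop, hij, hji, hxy, hyx, hj, hi, d14]
          · have hi : i = j + 1 := d6 i j hij hj
            have hj2 : ¬ j = i + 1 := d11 i j hi
            simp [sop, hij, hji, hxy, hyx, hj, hi, hj2, d14]
  · rintro (_ | ⟨x, i⟩) (_ | ⟨y, j⟩)
    · rfl
    · -- none, some
      by_cases h : k ≤ y.val
      · have h1 : (y+k).val = y.val - k := haddk_ge y h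
        have h2 : ¬ k ≤ (y+k).val := by have := hvlt y; omega
        simp [sop, h, h2, hxkk, d12]
      · have h1 : (y+k).val = y.val + k := haddk_lt y (by omega)
        have h2 : k ≤ (y+k).val := by omega
        simp [sop, h, h2, hxkk, d13]
    · -- some, none
      by_cases h : k ≤ x.val
      · have hin : sop k (some (x,i)) none = some (x+k, i+1) := by simp [sop, h]
        rw [hin]
        have c1 : ¬ i = i + 1 := d3 i
        have c2 : ¬ (x = x + k ∧ x.val < k) := by rintro ⟨h1, -⟩; exact hx_ne_xk x h1
        simp [sop, c1, c2, h, hknz]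
      · have hlt : x.val < k := by omega
        have hin : sop k (some (x,i)) none = some (x+k, i-1) := by simp [sop, h]
        rw [hin]
        have c1 : ¬ i = i - 1 := d4 i
        have c2 : ¬ (x = x + k ∧ x.val < k) := by rintro ⟨h1, -⟩; exact hx_ne_xk x h1
        have c3 : ¬ i - 1 = i + 1 := d7 i
        have c5 : k ≤ (x+k).val := by rw [haddk_lt x hlt]; omega
        simp [sop, c1, c2, c3, hxkk, c5, hknz]
    · -- some, some
      by_cases hij : i = j
      · subst hij
        by_cases hxy : x = y
        · subst hxy; simp [sop]
        · have hin : sop k (some (x,i)) (some (y,i)) = some (sig k (x+y), i+1) := by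
            simp [sop, hxy]
          rw [hin]
          have c1 := d3 i
          have c2 : ¬ (x = sig k (x+y) ∧ x.val < k) := by
            rintro ⟨h1, h2⟩
            apply hxy
            have h3 : tau k x = x + y := by nth_rewrite 1 [h1]; rw [tau_sig]
            obtain ⟨ht, -⟩ := tv1 x h2
            rw [ht] at h3
            exact add_left_cancel h3
          have c4 : ¬ (sig k (x+y) = x + k ∧ k ≤ x.val) := by
            rintro ⟨h1, h2⟩
            apply hxy
            have h3 : x + y = tau k (x + k) := by rw [← h1, tau_sig]
            have hlt : (x+k).val < k := by
              rw [haddk_ge x h2]; have := hvlt x; omega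
            obtain ⟨ht, -⟩ := tv1 (x+k) hlt
            rw [ht] at h3
            have h4 : (x+k)+(x+k) = (x + x) + ((k:ZMod (2*k)) + k) := by ring
            rw [h4, hkk0, add_zero] at h3
            exact (add_left_cancel h3).symm
          have hres : tau k (sig k (x+y)) - x = y := by rw [tau_sig]; ring
          simp [sop, c1, c2, c4, hres]
      · have hji : ¬ j = i := fun h => hij h.symm
        by_cases hd : x = y ∧ x.val < k
        · obtain ⟨rfl, hvk⟩ := hd
          have hin : sop k (some (x,i)) (some (x,j)) = some (x, -(i+j)) := by
            simp [sop, hij, hvk]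
          rw [hin]
          have c1 : ¬ i = -(i+j) := d9 i j hij
          have d15 : ∀ i j : ZMod 3, ¬ i = j → (i = -j + -i → i = j) := by decide
          have d16 : ∀ i j : ZMod 3, -(i + -(i + j)) = j := by decide
          simp [sop, c1, hvk, d16, d15 i j hij]
          exact d15 i j hij
        · by_cases hj : j = i + 1
          · by_cases h2 : y = x + k ∧ k ≤ x.val
            · have hin : sop k (some (x,i)) (some (y,j)) = none := by
                simp [sop, hij, hd, hj, h2]
              rw [hin]
              obtain ⟨hy, hxv⟩ := h2
              simp [sop, hxv, hy, hj]
            · have hin : sop k (some (x,i)) (some (y,j)) = some (tau k y - x, i) := by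
                simp [sop, hij, hd, hj, h2]
              rw [hin]
              have hw : ¬ x = tau k y - x := by
                intro h1
                have h3 : tau k y = x + x := by linear_combination -h1
                have h4 : y = sig k (x+x) := by rw [← h3, sig_tau]
                by_cases hvk : x.val < k
                · rw [diag_lt x hvk] at h4
                  exact hd ⟨h4.symm, hvk⟩
                · push_neg at hvk
                  rw [diag_ge x hvk] at h4
                  exact h2 ⟨h4, hvk⟩
              have hsum : x + (tau k y - x) = tau k y := by ring
              simp [sop, hw, hsum, sig_tau, hj]
          · have hi : i = j + 1 := d6 i j hij hj
            by_cases h2 : x = y + k ∧ k ≤ y.val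
            · have hin : sop k (some (x,i)) (some (y,j)) = none := by
                simp [sop, hij, hd, hj, h2, hknz]
              rw [hin]
              obtain ⟨hx1, hyv⟩ := h2
              have hxv : x.val < k := by
                rw [hx1, haddk_ge y hyv]; have := hvlt y; omega
              have hxk : ¬ k ≤ x.val := by omega
              have hxk2 : ¬ k ≤ (y + ((k:ℕ) : ZMod (2*k))).val := hx1 ▸ hxk
              simp [sop, hxk, hxk2, hx1, hxkk, hi, d12, hknz]
            · have hin : sop k (some (x,i)) (some (y,j)) = some (tau k x - y, j) := by
                simp [sop, hij, hd, hj, h2]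
              rw [hin]
              have c2 : ¬ (x = tau k x - y ∧ x.val < k) := by
                rintro ⟨h1, hvk⟩
                have h3 : tau k x = x + y := by
                  have := sub_eq_iff_eq_add.mp h1.symm
                  linear_combination this
                obtain ⟨ht, -⟩ := tv1 x hvk
                rw [ht] at h3
                exact hd ⟨add_left_cancel h3, hvk⟩
              have c4 : ¬ (x = (tau k x - y) + k ∧ k ≤ (tau k x - y).val) := by
                rintro ⟨h1, hwv⟩
                have hw : tau k x - y = x + ((k:ℕ) : ZMod (2*k)) := by
                  have hw0 := congrArg (fun z => z + ((k:ℕ) : ZMod (2*k))) h1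
                  simp only [hxkk] at hw0
                  exact hw0.symm
                by_cases hvk : x.val < k
                · obtain ⟨ht, -⟩ := tv1 x hvk
                  rw [ht] at hw
                  have hy : y = x + k := by
                    have h5 : y = x - k := by linear_combination -hw
                    rw [h5, sub_eq_add_neg, hneg]
                  have hyv : k ≤ y.val := by rw [hy, haddk_lt x hvk]; omega
                  exact h2 ⟨by rw [hy, hxkk], hyv⟩
                · push_neg at hvk
                  rw [hw, haddk_ge x hvk] at hwv
                  have := hvlt x
                  omega
              have hval : tau k x - (tau k x - y) = y := by ring
              simp [sop, hij, c2, hj, c4, hval]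



theorem sts_count {n : ℕ} (hn : 3 ≤ n)
    (T : Finset (Finset (Fin n))) (hcard : ∀ t ∈ T, t.card = 3)
    (huniq : ∀ p q : Fin n, p ≠ q → ∃! t : Finset (Fin n), t ∈ T ∧ p ∈ t ∧ q ∈ t) :
    n % 6 = 1 ∨ n % 6 = 3 := by
  have key : ∀ p : Fin n, 2 * (T.filter (fun t => p ∈ t)).card = n - 1 := by
    intro p
    have hU : (Finset.univ.erase p) =
        (T.filter (fun t => p ∈ t)).biUnion (fun t => t.erase p) := by
      ext q
      simp only [Finset.mem_erase, Finset.mem_univ, and_true, Finset.mem_biUnion,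
        Finset.mem_filter]
      constructor
      · intro hq
        obtain ⟨t, ⟨ht, hpt, hqt⟩, -⟩ := huniq p q (fun h => hq h.symm)
        exact ⟨t, ⟨ht, hpt⟩, hq, hqt⟩
      · rintro ⟨t, ⟨ht, hpt⟩, hq, hqt⟩
        exact hq
    have hdisj : ∀ t1 ∈ T.filter (fun t => p ∈ t), ∀ t2 ∈ T.filter (fun t => p ∈ t),
        t1 ≠ t2 → Disjoint (t1.erase p) (t2.erase p) := by
      intro t1 h1 t2 h2 hne
      rw [Finset.disjoint_left]
      intro q hq1 hq2
      rw [Finset.mem_filter] at h1 h2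
      rw [Finset.mem_erase] at hq1 hq2
      obtain ⟨t0, -, hu⟩ := huniq p q (fun h => hq1.1 h.symm)
      exact hne ((hu t1 ⟨h1.1, h1.2, hq1.2⟩).trans (hu t2 ⟨h2.1, h2.2, hq2.2⟩).symm)
    have hcount := congrArg Finset.card hU
    rw [Finset.card_biUnion hdisj, Finset.card_erase_of_mem (Finset.mem_univ p),
      Finset.card_univ, Fintype.card_fin] at hcount
    have hsum : ∑ t ∈ T.filter (fun t => p ∈ t), (t.erase p).card
        = 2 * (T.filter (fun t => p ∈ t)).card := by
      rw [Finset.sum_congr rfl (fun t ht => ?_), Finset.sum_const, smul_eq_mul, mul_comm]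
      rw [Finset.mem_filter] at ht
      rw [Finset.card_erase_of_mem ht.2, hcard t ht.1]
    rw [hsum] at hcount
    omega
  have htot : ∑ p : Fin n, (T.filter (fun t => p ∈ t)).card = 3 * T.card := by
    have h1 : ∀ p : Fin n, (T.filter (fun t => p ∈ t)).card
        = ∑ t ∈ T, if p ∈ t then 1 else 0 := fun p => Finset.card_filter _ _
    rw [Finset.sum_congr rfl (fun p _ => h1 p), Finset.sum_comm]
    have h2 : ∀ t ∈ T, (∑ p : Fin n, if p ∈ t then 1 else 0) = 3 := by
      intro t ht
      rw [← Finset.card_filter]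
      rw [Finset.filter_univ_mem]
      exact hcard t ht
    rw [Finset.sum_congr rfl h2, Finset.sum_const, smul_eq_mul, mul_comm]
  have h6 : 6 * T.card = n * (n - 1) := by
    calc 6 * T.card = 2 * (3 * T.card) := by ring
    _ = 2 * ∑ p : Fin n, (T.filter (fun t => p ∈ t)).card := by rw [htot]
    _ = ∑ p : Fin n, 2 * (T.filter (fun t => p ∈ t)).card := by rw [Finset.mul_sum]
    _ = ∑ _p : Fin n, (n - 1) := Finset.sum_congr rfl (fun p _ => key p)
    _ = n * (n - 1) := by
        rw [Finset.sum_const, Finset.card_univ, Fintype.card_fin, smul_eq_mul]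
  have hodd : (n - 1) % 2 = 0 := by
    have := key ⟨0, by omega⟩
    omega
  have hdvd : n * (n - 1) % 6 = 0 := by omega
  have hmod : n % 6 = 1 ∨ n % 6 = 3 ∨ n % 6 = 5 := by omega
  rcases hmod with h | h | h
  · exact Or.inl h
  · exact Or.inr h
  · exfalso
    have h4 : (n - 1) % 6 = 4 := by omega
    have hm := Nat.mul_mod n (n-1) 6
    rw [h, h4] at hm
    omega


/-- A Steiner triple system of order `n` (a family of 3-element subsets of an
`n`-set such that every pair of distinct points lies in exactly one triple)
exists if and only if `n ≡ 1` or `3 (mod 6)`, for `n ≥ 3`. -/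
theorem steiner_triple_system_exists_iff (n : ℕ) (hn : 3 ≤ n) :
    (∃ T : Finset (Finset (Fin n)),
      (∀ t ∈ T, t.card = 3) ∧
      (∀ p q : Fin n, p ≠ q → ∃! t : Finset (Fin n), t ∈ T ∧ p ∈ t ∧ q ∈ t)) ↔
    (n % 6 = 1 ∨ n % 6 = 3) := by
  constructor
  · rintro ⟨T, hcard, huniq⟩
    exact sts_count hn T hcard huniq
  · intro h
    rcases h with h | h
    · obtain ⟨k, rfl⟩ : ∃ k, n = 6*k+1 := ⟨n/6, by omega⟩
      have hk : 1 ≤ k := by omega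
      haveI : NeZero (2*k) := ⟨by omega⟩
      obtain ⟨h1, h2, h3⟩ := skolem hk
      refine sts_of_card (X := Option (ZMod (2*k) × ZMod 3)) (sop k) ?_ h1 h2 h3
      rw [Fintype.card_option, Fintype.card_prod, ZMod.card, ZMod.card]
      omega
    · obtain ⟨m, rfl⟩ : ∃ m, n = 3*m := ⟨n/3, by omega⟩
      have hm : m % 2 = 1 := by omega
      haveI : NeZero m := ⟨by omega⟩
      obtain ⟨h1, h2, h3⟩ := bose hm
      refine sts_of_card (X := ZMod m × ZMod 3) (bop m) ?_ h1 h2 h3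
      rw [Fintype.card_prod, ZMod.card, ZMod.card]
      ring
end

section
/- For any finite simple graph G, the number of acyclic orientations of G equals (−1)^{|V(G)|} times the chromatic polynomial of G evaluated at −1 (Stanley's theorem, a Tutte polynomial evaluation). -/
/-- `r` is an acyclic orientation of `G`: each edge of `G` is given exactly one
direction, only edges of `G` are directed, and there is no directed cycle. -/
def IsAcyclicOrientation {V : Type} (G : SimpleGraph V) (r : V → V → Prop) : Prop :=
  (∀ u v, r u v → G.Adj u v) ∧
  (∀ u v, G.Adj u v → (r u v ↔ ¬ r v u)) ∧
  ¬ ∃ (n : ℕ) (f : Fin (n + 1) → V), 0 < n ∧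
      (∀ i : Fin n, r (f i.castSucc) (f i.succ)) ∧ f 0 = f (Fin.last n)

/-!
The number `a(G)` of acyclic orientations and `(-1)^|V| P(G, -1)` satisfy the same recursion
over the nonempty independent sets `U` of `G`, and both equal `1` for the empty graph.

Every acyclic orientation has a source, the sources form an independent set, and the acyclic
orientations of `G` in which every vertex of an independent set `U` is a source correspond to
the acyclic orientations of `G - U`. Inclusion–exclusion over the set of sources therefore gives
`a(G) = ∑_U (-1)^(|U|+1) a(G - U)`.

Writing `s_j(G)` for the number of proper colourings of `G` onto `j` colours, one has
`P(G, k) = ∑_j (k choose j) s_j(G)`, hence `P(G, -1) = ∑_j (-1)^j s_j(G)`. Splitting off the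
class of the first colour gives `s_{j+1}(G) = ∑_U s_j(G - U)`, so `(-1)^|V| P(G, -1)` satisfies
the recursion of `a(G)`.
-/

open Finset Function Polynomial

theorem Nat.card_eq_sum_card_fiber {X Y : Type*} [Finite X] [Fintype Y] (φ : X → Y) :
    Nat.card X = ∑ y, Nat.card {x // φ x = y} := by
  rw [← Nat.card_sigma, Nat.card_congr (Equiv.sigmaFiberEquiv φ)]

theorem Nat.card_compl_coe_finset {V : Type*} [Finite V] (U : Finset V) :
    Nat.card ↥(U : Set V)ᶜ = Nat.card V - #U := by
  rw [Nat.card_coe_set_eq, Set.ncard_compl, Set.ncard_coe_finset]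

theorem Polynomial.eval_neg_one_of_eval_natCast_eq_sum_choose {p : ℤ[X]} {a : ℕ → ℤ} {n : ℕ}
    (h : ∀ k : ℕ, p.eval (k : ℤ) = ∑ j ∈ range (n + 1), (k.choose j : ℤ) * a j) :
    p.eval (-1) = ∑ j ∈ range (n + 1), (-1) ^ j * a j := by
  -- `descPochhammer ℚ j / j!` is the binomial polynomial `X.choose j`
  let Q : ℚ[X] := ∑ j ∈ range (n + 1), C ((a j : ℚ) / j.factorial) * descPochhammer ℚ j
  have hQ (x : ℚ) : Q.eval x =
      ∑ j ∈ range (n + 1), (a j : ℚ) / j.factorial * (descPochhammer ℚ j).eval x := by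
    simp [Q, eval_finsetSum]
  have hmap : p.map (Int.castRingHom ℚ) = Q := by
    refine eq_of_infinite_eval_eq _ _
      (Set.infinite_of_injective_forall_mem Nat.cast_injective fun k => ?_)
    simp only [Set.mem_ofPred_eq, eval_natCast_map, h, hQ, descPochhammer_eval_eq_descFactorial,
      Nat.descFactorial_eq_factorial_mul_choose, map_sum]
    refine sum_congr rfl fun j _ => ?_
    simp only [map_mul, eq_intCast, Int.cast_natCast, Nat.cast_mul]
    field_simp
  have hneg (j : ℕ) : (descPochhammer ℚ j).eval (-1) = (-1) ^ j * j.factorial := by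
    induction j with
    | zero => simp
    | succ j ih => rw [descPochhammer_succ_eval, ih, Nat.factorial_succ]; push_cast; ring
  have hcast : ((p.eval (-1) : ℤ) : ℚ) = Q.eval (-1) := by
    simpa [← hmap] using (eval_intCast_map (Int.castRingHom ℚ) p (-1)).symm
  simp only [hQ, hneg] at hcast
  refine Int.cast_injective (hcast.trans ?_)
  push_cast
  exact sum_congr rfl fun j _ => by field_simp

section DirectedCycle

variable {V W : Type*} {r : V → V → Prop}

/-- `IsAcyclicOrientation G r` unfolds to `... ∧ ¬ HasDirectedCycle r`. -/
def HasDirectedCycle (r : V → V → Prop) : Prop :=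
  ∃ (n : ℕ) (f : Fin (n + 1) → V), 0 < n ∧
    (∀ i : Fin n, r (f i.castSucc) (f i.succ)) ∧ f 0 = f (Fin.last n)

theorem hasDirectedCycle_of_forall_exists_rel [Finite V] [Nonempty V]
    (h : ∀ v, ∃ w, r w v) : HasDirectedCycle r := by
  choose pred hpred using h
  obtain ⟨v₀⟩ := ‹Nonempty V›
  obtain ⟨a, b, hne, hab⟩ := Finite.exists_ne_map_eq_of_infinite fun n : ℕ => pred^[n] v₀
  wlog hlt : a < b generalizing a b
  · exact this b a hne.symm hab.symm (by omega)
  refine ⟨b - a, fun t => pred^[b - t] v₀, by omega, fun t => ?_, ?_⟩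
  · have ht : (t : ℕ) < b - a := t.2
    simp only [Fin.val_castSucc, Fin.val_succ]
    rw [show b - t = b - (t + 1) + 1 by omega, iterate_succ_apply']
    exact hpred _
  · simp [show b - (b - a) = a by omega, hab]

theorem HasDirectedCycle.map (g : W → V) (h : HasDirectedCycle (r on g)) : HasDirectedCycle r :=
  let ⟨n, f, hn, hf, hcl⟩ := h
  ⟨n, g ∘ f, hn, hf, congrArg g hcl⟩

theorem HasDirectedCycle.restrict {p : V → Prop} (h : HasDirectedCycle r)
    (hp : ∀ a b, r a b → p b) : HasDirectedCycle (r on ((↑) : Subtype p → V)) := by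
  obtain ⟨n, f, hn, hf, hcl⟩ := h
  obtain ⟨m, rfl⟩ := Nat.exists_eq_add_of_lt hn
  have hfp : ∀ i, p (f i) := by
    intro i
    rcases Fin.eq_zero_or_eq_succ i with rfl | ⟨k, rfl⟩
    · rw [hcl, ← Fin.succ_last]
      exact hp _ _ (hf _)
    · exact hp _ _ (hf k)
  exact ⟨_, fun i => ⟨f i, hfp i⟩, hn, hf, Subtype.ext hcl⟩

end DirectedCycle

namespace IsAcyclicOrientation

variable {V : Type} {G : SimpleGraph V} {r : V → V → Prop}

theorem exists_source [Finite V] [Nonempty V] (hr : IsAcyclicOrientation G r) :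
    ∃ v, ∀ w, ¬ r w v := by
  by_contra! h
  exact hr.2.2 (hasDirectedCycle_of_forall_exists_rel h)

theorem induce (hr : IsAcyclicOrientation G r) (s : Set V) :
    IsAcyclicOrientation (G.induce s) (r on Subtype.val) :=
  ⟨fun _ _ h => hr.1 _ _ h, fun _ _ h => hr.2.1 _ _ h, fun h => hr.2.2 (HasDirectedCycle.map _ h)⟩

end IsAcyclicOrientation

namespace SimpleGraph

section Orientations

variable {V : Type} {G : SimpleGraph V} {s : Set V}

variable (G s) in
def extendBySources (r : ↥sᶜ → ↥sᶜ → Prop) : V → V → Prop :=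
  fun a b => (a ∈ s ∧ G.Adj a b) ∨ ∃ (ha : a ∈ sᶜ) (hb : b ∈ sᶜ), r ⟨a, ha⟩ ⟨b, hb⟩

theorem extendBySources_on_val (r : ↥sᶜ → ↥sᶜ → Prop) :
    (G.extendBySources s r on Subtype.val) = r := by
  ext ⟨a, ha⟩ ⟨b, hb⟩
  simp only [onFun, extendBySources]
  exact ⟨fun h => h.elim (fun h' => absurd h'.1 ha) fun ⟨_, _, h'⟩ => h',
    fun h => .inr ⟨ha, hb, h⟩⟩

theorem not_extendBySources_of_mem (hs : G.IsIndepSet s) (r : ↥sᶜ → ↥sᶜ → Prop) {a b : V}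
    (hb : b ∈ s) : ¬ G.extendBySources s r a b := by
  rintro (⟨ha, hab⟩ | ⟨_, hb', _⟩)
  · exact hs ha hb (G.ne_of_adj hab) hab
  · exact hb' hb

theorem extendBySources_restrict {r : V → V → Prop} (hr : IsAcyclicOrientation G r)
    (hsrc : ∀ u ∈ s, ∀ w, ¬ r w u) : G.extendBySources s (r on Subtype.val) = r := by
  ext a b
  refine ⟨?_, fun h => ?_⟩
  · rintro (⟨ha, hab⟩ | ⟨_, _, h⟩)
    exacts [(hr.2.1 a b hab).2 (hsrc a ha b), h]
  · by_cases ha : a ∈ s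
    · exact .inl ⟨ha, hr.1 a b h⟩
    · exact .inr ⟨ha, fun hb => hsrc b hb a h, h⟩

theorem isAcyclicOrientation_extendBySources (hs : G.IsIndepSet s) {r : ↥sᶜ → ↥sᶜ → Prop}
    (hr : IsAcyclicOrientation (G.induce sᶜ) r) :
    IsAcyclicOrientation G (G.extendBySources s r) := by
  refine ⟨?_, fun a b hab => ?_, fun hcyc => hr.2.2 ?_⟩
  · rintro a b (⟨_, hab⟩ | ⟨_, _, h⟩)
    exacts [hab, hr.1 _ _ h]
  · by_cases ha : a ∈ s
    · exact iff_of_true (.inl ⟨ha, hab⟩) (not_extendBySources_of_mem hs r ha)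
    by_cases hb : b ∈ s
    · exact iff_of_false (not_extendBySources_of_mem hs r hb)
        (not_not_intro (.inl ⟨hb, hab.symm⟩))
    have h := hr.2.1 ⟨a, ha⟩ ⟨b, hb⟩ hab
    rwa [← extendBySources_on_val (G := G) r] at h
  · have h := HasDirectedCycle.restrict (p := (· ∈ sᶜ)) hcyc fun _ _ h hb =>
      not_extendBySources_of_mem hs r hb h
    rwa [extendBySources_on_val] at h

variable (G) in
noncomputable def acyclicOrientationCount : ℕ :=
  Nat.card {r : V → V → Prop // IsAcyclicOrientation G r}

theorem card_acyclicOrientation_sources_of_isIndepSet (hs : G.IsIndepSet s) :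
    Nat.card {r : V → V → Prop // IsAcyclicOrientation G r ∧ ∀ u ∈ s, ∀ w, ¬ r w u} =
      (G.induce sᶜ).acyclicOrientationCount :=
  Nat.card_congr
    { toFun r := ⟨r.1 on Subtype.val, r.2.1.induce sᶜ⟩
      invFun r := ⟨G.extendBySources s r.1, isAcyclicOrientation_extendBySources hs r.2,
        fun _ hu _ => not_extendBySources_of_mem hs r.1 hu⟩
      left_inv r := Subtype.ext (extendBySources_restrict r.2.1 r.2.2)
      right_inv r := Subtype.ext (extendBySources_on_val r.1) }

theorem card_acyclicOrientation_sources_of_not_isIndepSet (hs : ¬ G.IsIndepSet s) :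
    Nat.card {r : V → V → Prop // IsAcyclicOrientation G r ∧ ∀ u ∈ s, ∀ w, ¬ r w u} = 0 := by
  obtain ⟨u, hu, v, hv, -, huv⟩ : ∃ u ∈ s, ∃ v ∈ s, u ≠ v ∧ G.Adj u v := by
    simpa [Set.Pairwise] using hs
  refine Nat.card_eq_zero.2 (.inl ⟨fun ⟨r, hr, hsrc⟩ => ?_⟩)
  exact hsrc v hv u ((hr.2.1 u v huv).2 (hsrc u hu v))

open Classical in
variable (G) in
noncomputable def nonemptyIndepSets [Fintype V] : Finset (Finset V) :=
  {U | U.Nonempty ∧ G.IsIndepSet ↑U}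

@[simp]
theorem mem_nonemptyIndepSets [Fintype V] {U : Finset V} :
    U ∈ G.nonemptyIndepSets ↔ U.Nonempty ∧ G.IsIndepSet ↑U := by
  simp [nonemptyIndepSets]

theorem acyclicOrientationCount_eq_sum [Fintype V] [Nonempty V] :
    (G.acyclicOrientationCount : ℤ) = ∑ U ∈ G.nonemptyIndepSets,
      (-1) ^ (#U + 1) * ((G.induce (↑U)ᶜ).acyclicOrientationCount : ℤ) := by
  classical
  let A : Finset (V → V → Prop) := {r | IsAcyclicOrientation G r}
  let S (v : V) : Finset (V → V → Prop) := {r ∈ A | ∀ w, ¬ r w v}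
  have hA : #A = G.acyclicOrientationCount := by
    simp [A, acyclicOrientationCount, Nat.card_eq_fintype_card, Fintype.card_subtype]
  have hcover : univ.biUnion S = A := by
    ext r
    simp only [S, A, mem_biUnion, mem_filter, mem_univ, true_and]
    exact ⟨fun ⟨_, hr, _⟩ => hr, fun hr => hr.exists_source.imp fun _ h => ⟨hr, h⟩⟩
  let F (U : Finset V) : ℤ := (-1) ^ (#U + 1) *
    if G.IsIndepSet ↑U then ((G.induce (↑U)ᶜ).acyclicOrientationCount : ℤ) else 0
  have hinter (U : Finset V) (hU : U.Nonempty) :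
      (-1) ^ (#U + 1) * (#(U.inf' hU S) : ℤ) = F U := by
    have hU' : U.inf' hU S =
        ({r | IsAcyclicOrientation G r ∧ ∀ u ∈ (U : Set V), ∀ w, ¬ r w u} : Finset _) := by
      ext r
      simp only [S, A, mem_inf', mem_filter, mem_univ, true_and, mem_coe]
      exact ⟨fun h => ⟨(h _ hU.choose_spec).1, fun u hu => (h u hu).2⟩,
        fun h i hi => ⟨h.1, h.2 i hi⟩⟩
    rw [hU', ← Fintype.card_subtype, ← Nat.card_eq_fintype_card]
    simp only [F]
    split_ifs with hs
    · rw [card_acyclicOrientation_sources_of_isIndepSet hs]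
    · rw [card_acyclicOrientation_sources_of_not_isIndepSet hs, Nat.cast_zero]
  rw [← hA, ← hcover, inclusion_exclusion_card_biUnion]
  simp only [hinter]
  rw [sum_coe_sort _ F]
  simp only [F, nonemptyIndepSets, powerset_univ, ← filter_filter, sum_filter, mul_ite, mul_zero]

theorem acyclicOrientationCount_of_isEmpty [IsEmpty V] : G.acyclicOrientationCount = 1 := by
  rw [acyclicOrientationCount, Nat.card_eq_one_iff_unique]
  refine ⟨⟨fun _ _ => Subtype.ext (funext isEmptyElim)⟩, ⟨⟨fun _ _ => False, ?_⟩⟩⟩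
  exact ⟨isEmptyElim, isEmptyElim, fun ⟨_, f, _⟩ => isEmptyElim (f 0)⟩

end Orientations

section Colorings

variable {V : Type} {α β : Type*} {G : SimpleGraph V} {s : Set V}

variable (G) in
abbrev IsProperColoring (f : V → α) : Prop := ∀ ⦃u v : V⦄, G.Adj u v → f u ≠ f v

variable (G) in
noncomputable def surjColoringCount (j : ℕ) : ℕ :=
  Nat.card {f : V → Fin j // G.IsProperColoring f ∧ Surjective f}

theorem card_surjColoring_congr (e : α ≃ β) :
    Nat.card {f : V → α // G.IsProperColoring f ∧ Surjective f} =
      Nat.card {f : V → β // G.IsProperColoring f ∧ Surjective f} :=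
  Nat.card_congr <| ((Equiv.refl V).arrowCongr e).subtypeEquiv fun f =>
    and_congr (forall₂_congr fun _ _ => imp_congr_right fun _ => e.injective.ne_iff.symm)
      (e.comp_surjective f).symm

theorem surjColoringCount_eq_zero_of_lt [Finite V] {j : ℕ} (hj : Nat.card V < j) :
    G.surjColoringCount j = 0 := by
  refine Nat.card_eq_zero.2 (.inl ⟨fun ⟨f, _, hf⟩ => ?_⟩)
  have := Nat.card_le_card_of_surjective f hf
  simp only [Nat.card_eq_fintype_card, Fintype.card_fin] at this
  omega

theorem surjColoringCount_zero [Nonempty V] : G.surjColoringCount 0 = 0 :=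
  Nat.card_eq_zero.2 (.inl ⟨fun ⟨f, _⟩ => (f (Classical.arbitrary V)).elim0⟩)

theorem surjColoringCount_zero_of_isEmpty [IsEmpty V] : G.surjColoringCount 0 = 1 := by
  rw [surjColoringCount, Nat.card_eq_one_iff_unique]
  exact ⟨⟨fun _ _ => Subtype.ext (funext isEmptyElim)⟩,
    ⟨⟨isEmptyElim, isEmptyElim, fun c => c.elim0⟩⟩⟩

section ExtendByNone

variable [DecidablePred (· ∈ s)]

variable (s) in
def extendByNone (g : ↥sᶜ → α) : V → Option α :=
  fun v => if h : v ∈ s then none else some (g ⟨v, h⟩)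

@[simp]
theorem extendByNone_eq_none_iff {g : ↥sᶜ → α} {v : V} :
    extendByNone s g v = none ↔ v ∈ s := by
  by_cases h : v ∈ s <;> simp [extendByNone, h]

@[simp]
theorem extendByNone_coe (g : ↥sᶜ → α) (v : ↥sᶜ) : extendByNone s g v = some (g v) :=
  dif_neg v.2

theorem extendByNone_injective : Injective (extendByNone (α := α) s) :=
  fun g g' h => funext fun v => Option.some_injective _ <| by
    rw [← extendByNone_coe, h, extendByNone_coe]

theorem isProperColoring_extendByNone_iff (hs : G.IsIndepSet s) {g : ↥sᶜ → α} :
    G.IsProperColoring (extendByNone s g) ↔ (G.induce sᶜ).IsProperColoring g := by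
  refine ⟨fun h u v huv heq => h huv (by simp [heq]), fun h u v huv heq => ?_⟩
  by_cases hu : u ∈ s <;> by_cases hv : v ∈ s
  · exact hs hu hv (G.ne_of_adj huv) huv
  all_goals simp only [extendByNone, hu, hv, dite_true, dite_false, reduceCtorEq,
    Option.some_inj] at heq
  exact h (u := ⟨u, hu⟩) (v := ⟨v, hv⟩) huv heq

theorem surjective_extendByNone_iff (hne : s.Nonempty) {g : ↥sᶜ → α} :
    Surjective (extendByNone s g) ↔ Surjective g := by
  refine ⟨fun h c => ?_, fun h => ?_⟩
  · obtain ⟨v, hv⟩ := h (some c)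
    have hvs : v ∉ s := fun hvs => by simp [extendByNone, hvs] at hv
    exact ⟨⟨v, hvs⟩, Option.some_injective _ (by rw [← extendByNone_coe, hv])⟩
  · rintro (_ | c)
    · exact hne.imp fun _ => extendByNone_eq_none_iff.2
    · obtain ⟨v, rfl⟩ := h c
      exact ⟨v, extendByNone_coe g v⟩

end ExtendByNone

theorem card_surjColoring_option_of_isIndepSet (hs : G.IsIndepSet s) (hne : s.Nonempty) :
    Nat.card {f : V → Option α //
        (G.IsProperColoring f ∧ Surjective f) ∧ ∀ v, f v = none ↔ v ∈ s} =
      Nat.card {g : ↥sᶜ → α // (G.induce sᶜ).IsProperColoring g ∧ Surjective g} := by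
  classical
  refine (Nat.card_congr (.ofBijective (fun g => ⟨extendByNone s g.1,
    ⟨(isProperColoring_extendByNone_iff hs).2 g.2.1, (surjective_extendByNone_iff hne).2 g.2.2⟩,
    fun _ => extendByNone_eq_none_iff⟩) ⟨fun g g' h => ?_, fun f => ?_⟩)).symm
  · exact Subtype.ext (extendByNone_injective (congrArg Subtype.val h))
  obtain ⟨f, ⟨hf, hsurj⟩, hnone⟩ := f
  have hsome (v : ↥sᶜ) : (f v).isSome :=
    Option.isSome_iff_ne_none.2 fun h => v.2 ((hnone v).1 h)
  have hext : extendByNone s (fun v => (f v).get (hsome v)) = f := by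
    ext1 v
    by_cases hv : v ∈ s
    · simp [extendByNone, hv, (hnone v).2 hv]
    · simp [extendByNone, hv]
  refine ⟨⟨fun v => (f v).get (hsome v), ?_⟩, Subtype.ext hext⟩
  rw [← isProperColoring_extendByNone_iff hs, ← surjective_extendByNone_iff hne, hext]
  exact ⟨hf, hsurj⟩

theorem card_surjColoring_option_eq_zero (h : ¬ (s.Nonempty ∧ G.IsIndepSet s)) :
    Nat.card {f : V → Option α //
        (G.IsProperColoring f ∧ Surjective f) ∧ ∀ v, f v = none ↔ v ∈ s} = 0 := by
  refine Nat.card_eq_zero.2 (.inl ⟨fun ⟨f, ⟨hf, hsurj⟩, hnone⟩ => h ⟨?_, ?_⟩⟩)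
  · exact (hsurj none).imp fun v hv => (hnone v).1 hv
  · exact fun u hu v hv _ huv => hf huv (((hnone u).2 hu).trans ((hnone v).2 hv).symm)

theorem surjColoringCount_succ [Fintype V] (j : ℕ) :
    G.surjColoringCount (j + 1) =
      ∑ U ∈ G.nonemptyIndepSets, (G.induce (U : Set V)ᶜ).surjColoringCount j := by
  classical
  rw [surjColoringCount, card_surjColoring_congr (finSuccEquiv j),
    Nat.card_eq_sum_card_fiber fun f => ({v | f.1 v = none} : Finset V)]
  have hfiber (U : Finset V) :
      Nat.card {f : {f : V → Option (Fin j) // G.IsProperColoring f ∧ Surjective f} //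
        ({v | f.1 v = none} : Finset V) = U} =
      Nat.card {f : V → Option (Fin j) //
        (G.IsProperColoring f ∧ Surjective f) ∧ ∀ v, f v = none ↔ v ∈ (U : Set V)} :=
    Nat.card_congr <| (Equiv.subtypeEquivRight fun f => by simp [Finset.ext_iff]).trans
      (Equiv.subtypeSubtypeEquivSubtypeInter _ _)
  symm
  refine sum_subset_zero_on_sdiff (subset_univ _) (fun U hU => ?_) fun U hU => ?_
  · rw [hfiber, card_surjColoring_option_eq_zero]
    simpa using hU
  · rw [mem_nonemptyIndepSets] at hU
    rw [hfiber, card_surjColoring_option_of_isIndepSet hU.2 hU.1]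
    rfl

theorem card_properColoring_eq_sum [Fintype V] [Fintype α] [DecidableEq α] :
    Nat.card {f : V → α // G.IsProperColoring f} =
      ∑ T : Finset α, Nat.card {g : V → T // G.IsProperColoring g ∧ Surjective g} := by
  rw [Nat.card_eq_sum_card_fiber fun f => univ.image f.1]
  refine sum_congr rfl fun T _ => Nat.card_congr
    { toFun f := ⟨fun v => ⟨f.1.1 v, (Finset.ext_iff.1 f.2 _).1 (mem_image_of_mem _ (mem_univ v))⟩,
        fun _ _ huv h => f.1.2 huv (congrArg Subtype.val h), fun t => ?_⟩
      invFun g := ⟨⟨fun v => g.1 v, fun _ _ huv h => g.2.1 huv (Subtype.ext h)⟩, ?_⟩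
      left_inv _ := rfl
      right_inv _ := rfl }
  · obtain ⟨v, -, hv⟩ := mem_image.1 ((Finset.ext_iff.1 f.2 _).2 t.2)
    exact ⟨v, Subtype.ext hv⟩
  · ext t
    refine ⟨fun ht => ?_, fun ht => ?_⟩
    · obtain ⟨v, -, rfl⟩ := mem_image.1 ht
      exact (g.1 v).2
    · obtain ⟨v, hv⟩ := g.2.2 ⟨t, ht⟩
      exact mem_image.2 ⟨v, mem_univ v, congrArg Subtype.val hv⟩

theorem properColoringCount_eq_sum_choose [Fintype V] (k : ℕ) :
    Nat.card {f : V → Fin k // G.IsProperColoring f} =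
      ∑ j ∈ range (Nat.card V + 1), k.choose j * G.surjColoringCount j := by
  classical
  have hT (T : Finset (Fin k)) :
      Nat.card {g : V → T // G.IsProperColoring g ∧ Surjective g} = G.surjColoringCount #T :=
    card_surjColoring_congr T.equivFin
  rw [card_properColoring_eq_sum]
  simp only [hT]
  rw [← powerset_univ, sum_powerset_apply_card, card_univ, Fintype.card_fin]
  simp only [smul_eq_mul]
  rw [← eventually_constant_sum (N := k + 1) (n := k + Nat.card V + 1),
    eventually_constant_sum (N := Nat.card V + 1)]
  · exact fun j hj => by rw [surjColoringCount_eq_zero_of_lt (by omega), mul_zero]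
  · omega
  · exact fun j hj => by rw [Nat.choose_eq_zero_of_lt (by omega), zero_mul]
  · omega

end Colorings

variable {V : Type} {G : SimpleGraph V}

variable (G) in
/-- `P(G, -1)`, by `properColoringCount_eq_sum_choose`. -/
noncomputable def surjColoringAltSum : ℤ :=
  ∑ j ∈ range (Nat.card V + 1), (-1) ^ j * (G.surjColoringCount j : ℤ)

theorem surjColoringAltSum_eq_neg_sum [Fintype V] [Nonempty V] :
    G.surjColoringAltSum =
      -∑ U ∈ G.nonemptyIndepSets, (G.induce (U : Set V)ᶜ).surjColoringAltSum := by
  obtain ⟨m, hm⟩ := Nat.exists_eq_add_of_lt (Nat.card_pos (α := V))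
  rw [surjColoringAltSum, hm, zero_add, sum_range_succ', surjColoringCount_zero]
  simp only [surjColoringCount_succ, Nat.cast_sum, mul_sum, Nat.cast_zero, mul_zero, add_zero]
  rw [sum_comm, ← sum_neg_distrib]
  refine sum_congr rfl fun U hU => ?_
  have hcard : Nat.card ↥(U : Set V)ᶜ ≤ m := by
    have := (mem_nonemptyIndepSets.1 hU).1.card_pos
    rw [Nat.card_compl_coe_finset, hm]
    omega
  rw [surjColoringAltSum, ← sum_neg_distrib,
    ← eventually_constant_sum (N := Nat.card ↥(U : Set V)ᶜ + 1) (n := m + 1) _ (by omega)]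
  · exact sum_congr rfl fun j _ => by ring
  · intro j hj
    rw [surjColoringCount_eq_zero_of_lt (by omega), Nat.cast_zero, mul_zero, neg_zero]

variable (G) in
theorem acyclicOrientationCount_eq_neg_one_pow_mul [Finite V] :
    (G.acyclicOrientationCount : ℤ) = (-1) ^ Nat.card V * G.surjColoringAltSum := by
  induction hn : Nat.card V using Nat.strong_induction_on generalizing V with
  | _ n ih =>
  cases isEmpty_or_nonempty V
  · simp [acyclicOrientationCount_of_isEmpty, surjColoringAltSum,
      surjColoringCount_zero_of_isEmpty, ← hn]
  have := Fintype.ofFinite V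
  rw [acyclicOrientationCount_eq_sum, surjColoringAltSum_eq_neg_sum, mul_neg, mul_sum,
    ← sum_neg_distrib]
  refine sum_congr rfl fun U hU => ?_
  have hUn : 0 < #U ∧ #U ≤ n := ⟨(mem_nonemptyIndepSets.1 hU).1.card_pos,
    by rw [← hn, Nat.card_eq_fintype_card]; exact card_le_univ U⟩
  rw [ih (n - #U) (by omega) _ (by rw [Nat.card_compl_coe_finset, hn]), ← mul_assoc, ← pow_add,
    show #U + 1 + (n - #U) = n + 1 by omega, pow_succ]
  ring

end SimpleGraph

theorem stanley_acyclic_orientations_general {V : Type} [Fintype V]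
    (G : SimpleGraph V) (P : Polynomial ℤ)
    (hP : ∀ k : ℕ, P.eval (k : ℤ) =
      Nat.card {f : V → Fin k // ∀ ⦃u v : V⦄, G.Adj u v → f u ≠ f v}) :
    (Nat.card {r : V → V → Prop // IsAcyclicOrientation G r} : ℤ) =
      (-1) ^ (Fintype.card V) * P.eval (-1) := by
  have hPneg : P.eval (-1) = G.surjColoringAltSum :=
    eval_neg_one_of_eval_natCast_eq_sum_choose fun k => by
      rw [hP, G.properColoringCount_eq_sum_choose k]
      push_cast
      rfl
  rw [hPneg, ← Nat.card_eq_fintype_card]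
  exact G.acyclicOrientationCount_eq_neg_one_pow_mul

/-- Stanley's theorem: the number of acyclic orientations of a finite simple
graph `G` equals `(-1)^{|V|} P(G, -1)`, where `P(G, ·)` is the chromatic
polynomial of `G`. -/
theorem stanley_acyclic_orientations {V : Type} [Fintype V] [DecidableEq V]
    (G : SimpleGraph V) (P : Polynomial ℤ)
    (hP : ∀ k : ℕ, P.eval (k : ℤ) =
      Nat.card {f : V → Fin k // ∀ ⦃u v : V⦄, G.Adj u v → f u ≠ f v}) :
    (Nat.card {r : V → V → Prop // IsAcyclicOrientation G r} : ℤ) =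
      (-1) ^ (Fintype.card V) * P.eval (-1) :=
  stanley_acyclic_orientations_general G P hP
end

section
/- For every k ≥ 1, any finite set of at least R(k) points in general position in the plane contains k points in convex position for some function R (Erdős–Szekeres theorem). -/
/-!
Colour every triple of points by its orientation. Ordering the points lexicographically, Ramsey's
theorem for triples yields `k` points all of whose increasing triples have the same orientation,
which general position makes strict: the points form a counterclockwise chain (after reversing the
order if necessary). In such a chain each point lies strictly to the right of the line through its
two cyclic neighbours, while all the other points lie weakly to its left, so no point is in the
convex hull of the others.

Ramsey's theorem for triples is reduced to the one for pairs, and that one to the pigeonhole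
principle, by repeatedly splitting off the least element, which makes the colour of a tuple depend
only on its least element.
-/

open Finset Function

/-- Twice the signed area of the triangle `a b c`: positive iff `a, b, c` turn counterclockwise. -/
def signedArea (a b c : ℝ × ℝ) : ℝ :=
  (b.1 - a.1) * (c.2 - a.2) - (b.2 - a.2) * (c.1 - a.1)

theorem signedArea_rotate (a b c : ℝ × ℝ) : signedArea a b c = signedArea b c a := by
  simp only [signedArea]; ring

theorem signedArea_swap (a b c : ℝ × ℝ) : signedArea b a c = -signedArea a b c := by
  simp only [signedArea]; ring

theorem signedArea_swap_right (a b c : ℝ × ℝ) : signedArea a c b = -signedArea a b c := by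
  simp only [signedArea]; ring

theorem collinear_of_signedArea_eq_zero {a b c : ℝ × ℝ} (h : signedArea a b c = 0) :
    Collinear ℝ {a, b, c} := by
  obtain rfl | hab := eq_or_ne a b
  · simpa using collinear_pair ℝ a c
  have hnorm : (b.1 - a.1) ^ 2 + (b.2 - a.2) ^ 2 ≠ 0 := by
    intro h0
    apply hab
    ext <;> nlinarith [sq_nonneg (b.1 - a.1), sq_nonneg (b.2 - a.2)]
  rw [collinear_iff_of_mem (Set.mem_insert a _)]
  refine ⟨b - a, ?_⟩
  simp only [Set.mem_insert_iff, Set.mem_singleton_iff, vadd_eq_add]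
  rintro p (rfl | rfl | rfl)
  · exact ⟨0, by simp⟩
  · exact ⟨1, by simp⟩
  · -- the coefficient of the projection of `p - a` onto `b - a`
    refine ⟨((p.1 - a.1) * (b.1 - a.1) + (p.2 - a.2) * (b.2 - a.2)) /
      ((b.1 - a.1) ^ 2 + (b.2 - a.2) ^ 2), ?_⟩
    simp only [signedArea] at h
    ext <;> simp only [Prod.fst_add, Prod.snd_add, Prod.smul_fst, Prod.smul_snd, Prod.fst_sub,
      Prod.snd_sub, smul_eq_mul] <;> field_simp
    · linear_combination (a.2 - b.2) * h
    · linear_combination (b.1 - a.1) * h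

theorem convex_setOf_signedArea_nonneg (a b : ℝ × ℝ) :
    Convex ℝ {z | 0 ≤ signedArea a b z} := by
  intro z hz w hw s t hs ht hst
  have : signedArea a b (s • z + t • w) = s * signedArea a b z + t * signedArea a b w := by
    simp only [signedArea, Prod.fst_add, Prod.snd_add, Prod.smul_fst, Prod.smul_snd, smul_eq_mul]
    linear_combination (b.1 * a.2 - b.2 * a.1) * hst
  simp only [Set.mem_ofPred_eq] at hz hw ⊢
  rw [this]
  positivity

theorem notMem_convexHull_of_signedArea_neg {a b x : ℝ × ℝ} {t : Set (ℝ × ℝ)}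
    (ht : ∀ z ∈ t, 0 ≤ signedArea a b z) (hx : signedArea a b x < 0) :
    x ∉ convexHull ℝ t := fun h =>
  hx.not_ge (convexHull_min ht (convex_setOf_signedArea_nonneg a b) h)

variable {ι : Type*} [LinearOrder ι]

def IsCounterclockwise (p : ι → ℝ × ℝ) : Prop :=
  ∀ ⦃i j l⦄, i < j → j < l → 0 < signedArea (p i) (p j) (p l)

namespace IsCounterclockwise

variable {p : ι → ℝ × ℝ}

theorem signedArea_nonneg (h : IsCounterclockwise p) {i j l : ι} (hij : i ≤ j) (hjl : j ≤ l) :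
    0 ≤ signedArea (p i) (p j) (p l) := by
  rcases hij.eq_or_lt with rfl | hij
  · simp [signedArea]
  rcases hjl.eq_or_lt with rfl | hjl
  · exact le_of_eq (by simp only [signedArea]; ring)
  exact (h hij hjl).le

theorem notMem_convexHull_of_lt_of_lt (h : IsCounterclockwise p) {s : Set ι} {a b x : ι}
    (hax : a < x) (hxb : x < b) (hs : ∀ j ∈ s, j ≤ a ∨ b ≤ j) : p x ∉ convexHull ℝ (p '' s) := by
  refine notMem_convexHull_of_signedArea_neg (a := p a) (b := p b) ?_ ?_
  · rintro _ ⟨j, hj, rfl⟩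
    rcases hs j hj with hja | hbj
    · rw [signedArea_rotate, signedArea_rotate]
      exact h.signedArea_nonneg hja (hax.trans hxb).le
    · exact h.signedArea_nonneg (hax.trans hxb).le hbj
  · rw [signedArea_swap_right]
    exact neg_neg_of_pos (h hax hxb)

theorem notMem_convexHull_of_lt_or_lt (h : IsCounterclockwise p) {s : Set ι} {a b x : ι}
    (hab : a < b) (hs : ∀ j ∈ s, a ≤ j ∧ j ≤ b) (hx : x < a ∨ b < x) :
    p x ∉ convexHull ℝ (p '' s) := by
  refine notMem_convexHull_of_signedArea_neg (a := p b) (b := p a) ?_ ?_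
  · rintro _ ⟨j, hj, rfl⟩
    rw [signedArea_rotate]
    exact h.signedArea_nonneg (hs j hj).1 (hs j hj).2
  · rcases hx with hxa | hbx
    · rw [signedArea_rotate, signedArea_rotate, signedArea_swap_right]
      exact neg_neg_of_pos (h hxa hab)
    · rw [signedArea_rotate, signedArea_swap_right]
      exact neg_neg_of_pos (h hab hbx)

theorem notMem_convexHull (h : IsCounterclockwise p) (hp : Injective p) {s : Finset ι} {x : ι}
    (hx : x ∉ s) : p x ∉ convexHull ℝ (p '' s) := by
  have hne : ∀ j ∈ s, j ≠ x := fun j hj hjx => hx (hjx ▸ hj)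
  by_cases hbetween : (∃ a ∈ s, a < x) ∧ ∃ b ∈ s, x < b
  · obtain ⟨⟨a, has, hax⟩, ⟨b, hbs, hxb⟩⟩ := hbetween
    have hlo : {j ∈ s | j < x}.Nonempty := ⟨a, mem_filter.2 ⟨has, hax⟩⟩
    have hhi : {j ∈ s | x < j}.Nonempty := ⟨b, mem_filter.2 ⟨hbs, hxb⟩⟩
    refine h.notMem_convexHull_of_lt_of_lt (mem_filter.1 (max'_mem _ hlo)).2
      (mem_filter.1 (min'_mem _ hhi)).2 fun j hj => ?_
    rcases (hne j hj).lt_or_gt with hjx | hxj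
    · exact .inl (le_max' _ j (mem_filter.2 ⟨hj, hjx⟩))
    · exact .inr (min'_le _ j (mem_filter.2 ⟨hj, hxj⟩))
  rcases s.eq_empty_or_nonempty with rfl | hs
  · simp
  have hbounds : ∀ j ∈ s, s.min' hs ≤ j ∧ j ≤ s.max' hs := fun j hj =>
    ⟨min'_le s j hj, le_max' s j hj⟩
  rcases (s.min'_le_max' hs).eq_or_lt with heq | hlt
  · intro hmem
    have hsub : p '' s ⊆ {p (s.min' hs)} := by
      rintro _ ⟨j, hj, rfl⟩
      rw [Set.mem_singleton_iff, le_antisymm (heq ▸ (hbounds j hj).2) (hbounds j hj).1]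
    have hxa := convexHull_mono hsub hmem
    rw [convexHull_singleton, Set.mem_singleton_iff] at hxa
    exact hx (hp hxa ▸ min'_mem s hs)
  · refine h.notMem_convexHull_of_lt_or_lt hlt hbounds ?_
    by_cases hlo : ∃ a ∈ s, a < x
    · refine .inr (lt_of_le_of_ne ?_ (hne _ (max'_mem s hs)))
      by_contra! hxlt
      exact hbetween ⟨hlo, _, max'_mem s hs, hxlt⟩
    · push Not at hlo
      exact .inl (lt_of_le_of_ne (hlo _ (min'_mem s hs)) (hne _ (min'_mem s hs)).symm)

theorem convexIndependent (h : IsCounterclockwise p) (hp : Injective p) : ConvexIndependent ℝ p :=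
  convexIndependent_iff_finset.2 fun s x hx =>
    by_contra fun hxs => h.notMem_convexHull hp hxs (by simpa using hx)

end IsCounterclockwise

theorem convexIndependent_of_signedArea_neg {p : ι → ℝ × ℝ} (hp : Injective p)
    (h : ∀ ⦃i j l⦄, i < j → j < l → signedArea (p i) (p j) (p l) < 0) :
    ConvexIndependent ℝ p := by
  have hccw : IsCounterclockwise (p ∘ OrderDual.ofDual) := fun i j l hij hjl => by
    rw [comp_apply, signedArea_rotate, signedArea_swap]
    exact neg_pos_of_neg (h hjl hij)
  exact (hccw.convexIndependent (hp.comp OrderDual.ofDual.injective)).comp_embedding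
    OrderDual.toDual.toEmbedding

theorem convexIndependent_of_sign_signedArea_eq {p : ι → ℝ × ℝ} (hp : Injective p)
    (hne : ∀ ⦃i j l⦄, i < j → j < l → signedArea (p i) (p j) (p l) ≠ 0) {σ : SignType}
    (hσ : ∀ ⦃i j l⦄, i < j → j < l → SignType.sign (signedArea (p i) (p j) (p l)) = σ) :
    ConvexIndependent ℝ p := by
  cases σ with
  | zero =>
    exact IsCounterclockwise.convexIndependent
      (fun _ _ _ hij hjl => absurd (sign_eq_zero_iff.1 (hσ hij hjl)) (hne hij hjl)) hp
  | neg =>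
    exact convexIndependent_of_signedArea_neg hp
      fun _ _ _ hij hjl => sign_eq_neg_one_iff.1 (hσ hij hjl)
  | pos =>
    exact IsCounterclockwise.convexIndependent
      (fun _ _ _ hij hjl => sign_eq_one_iff.1 (hσ hij hjl)) hp

section Ramsey

variable {α κ : Type*} [Fintype κ] [Nonempty κ]

theorem exists_monochromatic_subset (f : α → κ) {A : Finset α} {m : ℕ}
    (hA : Fintype.card κ * m ≤ #A) : ∃ B ⊆ A, #B = m ∧ ∃ s, ∀ i ∈ B, f i = s := by
  classical
  obtain ⟨s, -, hs⟩ := exists_le_card_fiber_of_mul_le_card_of_maps_to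
    (fun a _ => mem_univ (f a)) univ_nonempty (by simpa using hA)
  obtain ⟨B, hB, rfl⟩ := exists_subset_card_eq hs
  exact ⟨B, hB.trans (filter_subset _ _), rfl, s, fun i hi => (mem_filter.1 (hB hi)).2⟩

variable [LinearOrder α]

theorem mem_of_mem_insert_of_lt {v i j : α} {B : Finset α} (hv : ∀ b ∈ B, v < b)
    (hi : i ∈ insert v B) (hj : j ∈ insert v B) (hij : i < j) : j ∈ B := by
  rcases mem_insert.1 hj with rfl | hj
  · rcases mem_insert.1 hi with rfl | hi
    · exact absurd hij (lt_irrefl _)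
    · exact absurd hij (hv i hi).not_gt
  · exact hj

theorem exists_minHomogeneous_subset_pairs (m : ℕ) : ∃ N, ∀ (c : α → α → κ) (A : Finset α),
    N ≤ #A → ∃ B ⊆ A, #B = m ∧ ∃ f : α → κ, ∀ i ∈ B, ∀ j ∈ B, i < j → c i j = f i := by
  classical
  induction m with
  | zero =>
    exact ⟨0, fun _ _ _ => ⟨∅, empty_subset _, rfl, fun _ => Classical.arbitrary κ, by simp⟩⟩
  | succ m ih =>
    obtain ⟨N, hN⟩ := ih
    refine ⟨Fintype.card κ * N + 1, fun c A hA => ?_⟩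
    have hne : A.Nonempty := card_pos.1 (by omega)
    set v := A.min' hne
    obtain ⟨A', hA'v, hA', s, hs⟩ := exists_monochromatic_subset (c v) (A := A.erase v) (m := N)
      (by rw [card_erase_of_mem (min'_mem A hne)]; omega)
    obtain ⟨B, hBA', rfl, f, hf⟩ := hN c A' hA'.ge
    have hv : ∀ b ∈ B, v < b := fun b hb =>
      min'_lt_of_mem_erase_min' A hne (hA'v (hBA' hb))
    refine ⟨insert v B,
      insert_subset (min'_mem A hne) (hBA'.trans (hA'v.trans (erase_subset _ _))),
      card_insert_of_notMem fun hvB => (hv v hvB).false, update f v s,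
      fun i hi j hj hij => ?_⟩
    have hjB := mem_of_mem_insert_of_lt hv hi hj hij
    rcases mem_insert.1 hi with rfl | hiB
    · rw [update_self]; exact hs j (hBA' hjB)
    · rw [update_of_ne (hv i hiB).ne']; exact hf i hiB j hjB hij

theorem exists_monochromatic_subset_pairs (m : ℕ) : ∃ N, ∀ (c : α → α → κ) (A : Finset α),
    N ≤ #A → ∃ B ⊆ A, #B = m ∧ ∃ s, ∀ i ∈ B, ∀ j ∈ B, i < j → c i j = s := by
  obtain ⟨N, hN⟩ := exists_minHomogeneous_subset_pairs (α := α) (κ := κ) (Fintype.card κ * m)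
  refine ⟨N, fun c A hA => ?_⟩
  obtain ⟨B, hBA, hB, f, hf⟩ := hN c A hA
  obtain ⟨B', hB'B, hB', s, hs⟩ := exists_monochromatic_subset f hB.ge
  exact ⟨B', hB'B.trans hBA, hB', s, fun i hi j hj hij =>
    (hf i (hB'B hi) j (hB'B hj) hij).trans (hs i hi)⟩

theorem exists_minHomogeneous_subset_triples (m : ℕ) :
    ∃ N, ∀ (c : α → α → α → κ) (A : Finset α), N ≤ #A → ∃ B ⊆ A, #B = m ∧ ∃ f : α → κ,
      ∀ i ∈ B, ∀ j ∈ B, ∀ l ∈ B, i < j → j < l → c i j l = f i := by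
  classical
  induction m with
  | zero =>
    exact ⟨0, fun _ _ _ => ⟨∅, empty_subset _, rfl, fun _ => Classical.arbitrary κ, by simp⟩⟩
  | succ m ih =>
    obtain ⟨N, hN⟩ := ih
    obtain ⟨N₂, hN₂⟩ := exists_monochromatic_subset_pairs (α := α) (κ := κ) N
    refine ⟨N₂ + 1, fun c A hA => ?_⟩
    have hne : A.Nonempty := card_pos.1 (by omega)
    set v := A.min' hne
    obtain ⟨A', hA'v, hA', s, hs⟩ := hN₂ (c v) (A.erase v)
      (by rw [card_erase_of_mem (min'_mem A hne)]; omega)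
    obtain ⟨B, hBA', rfl, f, hf⟩ := hN c A' hA'.ge
    have hv : ∀ b ∈ B, v < b := fun b hb =>
      min'_lt_of_mem_erase_min' A hne (hA'v (hBA' hb))
    refine ⟨insert v B,
      insert_subset (min'_mem A hne) (hBA'.trans (hA'v.trans (erase_subset _ _))),
      card_insert_of_notMem fun hvB => (hv v hvB).false, update f v s,
      fun i hi j hj l hl hij hjl => ?_⟩
    have hjB := mem_of_mem_insert_of_lt hv hi hj hij
    have hlB := mem_of_mem_insert_of_lt hv (mem_insert_of_mem hjB) hl hjl
    rcases mem_insert.1 hi with rfl | hiB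
    · rw [update_self]; exact hs j (hBA' hjB) l (hBA' hlB) hjl
    · rw [update_of_ne (hv i hiB).ne']; exact hf i hiB j hjB l hlB hij hjl

theorem exists_monochromatic_subset_triples (m : ℕ) :
    ∃ N, ∀ (c : α → α → α → κ) (A : Finset α), N ≤ #A →
      ∃ B ⊆ A, #B = m ∧ ∃ s, ∀ i ∈ B, ∀ j ∈ B, ∀ l ∈ B, i < j → j < l → c i j l = s := by
  obtain ⟨N, hN⟩ :=
    exists_minHomogeneous_subset_triples (α := α) (κ := κ) (Fintype.card κ * m)
  refine ⟨N, fun c A hA => ?_⟩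
  obtain ⟨B, hBA, hB, f, hf⟩ := hN c A hA
  obtain ⟨B', hB'B, hB', s, hs⟩ := exists_monochromatic_subset f hB.ge
  exact ⟨B', hB'B.trans hBA, hB', s, fun i hi j hj l hl hij hjl =>
    (hf i (hB'B hi) j (hB'B hj) l (hB'B hl) hij hjl).trans (hs i hi)⟩

end Ramsey

/-- Erdős–Szekeres theorem on points in convex position. -/
theorem erdos_szekeres_convex_position :
    ∀ k : ℕ, 1 ≤ k → ∃ R : ℕ, ∀ S : Finset (ℝ × ℝ),
      R ≤ S.card →
      (∀ a ∈ S, ∀ b ∈ S, ∀ c ∈ S, a ≠ b → a ≠ c → b ≠ c →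
        ¬ Collinear ℝ ({a, b, c} : Set (ℝ × ℝ))) →
      ∃ T ⊆ S, T.card = k ∧
        ∀ x ∈ T, x ∉ convexHull ℝ (↑(T.erase x) : Set (ℝ × ℝ)) := by
  intro k _
  obtain ⟨R, hR⟩ := exists_monochromatic_subset_triples (α := ℝ ×ₗ ℝ) (κ := SignType) k
  refine ⟨R, fun S hS hgp => ?_⟩
  obtain ⟨B, hBS, rfl, σ, hσ⟩ :=
    hR (fun a b c => SignType.sign (signedArea (ofLex a) (ofLex b) (ofLex c)))
      (S.map toLex.toEmbedding) (by simpa using hS)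
  set p : B → ℝ × ℝ := fun i => ofLex (i : ℝ ×ₗ ℝ)
  have hpS : ∀ i, p i ∈ S := fun i => by simpa using hBS i.2
  have hp : Injective p := fun i j hij => Subtype.ext (ofLex.injective hij)
  have hci : ConvexIndependent ℝ p :=
    convexIndependent_of_sign_signedArea_eq hp
      (fun i j l hij hjl => mt collinear_of_signedArea_eq_zero <|
        hgp _ (hpS i) _ (hpS j) _ (hpS l) (hp.ne hij.ne) (hp.ne (hij.trans hjl).ne) (hp.ne hjl.ne))
      (fun i j l hij hjl => hσ i i.2 j j.2 l l.2 hij hjl)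
  have hrange : Set.range p = ↑(B.image ofLex) := by ext; simp [p]
  have hT := hci.range
  rw [hrange, convexIndependent_set_iff_notMem_convexHull_sdiff] at hT
  refine ⟨B.image ofLex, fun x hx => ?_, card_image_of_injective _ ofLex.injective,
    fun x hx => ?_⟩
  · obtain ⟨i, hi, rfl⟩ := mem_image.1 hx
    exact hpS ⟨i, hi⟩
  · rw [coe_erase]
    exact hT x hx
end
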